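/- arXiv:1905.09206 — 10 statements merged into one kernel-verified Lean document; each statement's English description precedes it below -/
import Mathlib

section
/- Let μ and ν be charges on 𝒜 and let μ̂ and ν̂ be their Stone extensions. Then ν is absolutely continuous with respect to μ (ν ≪ μ) if and only if every Borel subset E of F with μ̂(E) = 0 satisfies ν̂(E) = 0 (i.e., ν̂ is absolutely continuous with respect to μ̂ as measures). -/
open Filter Topology MeasureTheory

variable {X : Type*}

/-- A field (algebra) of subsets of `X`. -/
def IsSetField (𝒜 : Set (Set X)) : Prop :=
  ∅ ∈ 𝒜 ∧ Set.univ ∈ 𝒜 ∧ (∀ A ∈ 𝒜, Aᶜ ∈ 𝒜) ∧ ∀ A ∈ 𝒜, ∀ B ∈ 𝒜, A ∪ B ∈ 𝒜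

/-- A σ-algebra of subsets of `X`. -/
def IsSigmaField (𝒜 : Set (Set X)) : Prop :=
  ∅ ∈ 𝒜 ∧ Set.univ ∈ 𝒜 ∧ (∀ A ∈ 𝒜, Aᶜ ∈ 𝒜) ∧
    ∀ A : ℕ → Set X, (∀ n, A n ∈ 𝒜) → (⋃ n, A n) ∈ 𝒜

/-- A (nonnegative, bounded) charge on the field `𝒜`: a nonnegative finitely
additive real-valued set function vanishing on `∅`. -/
def IsCharge (𝒜 : Set (Set X)) (μ : Set X → ℝ) : Prop :=
  μ ∅ = 0 ∧ (∀ A ∈ 𝒜, 0 ≤ μ A) ∧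
    ∀ A ∈ 𝒜, ∀ B ∈ 𝒜, Disjoint A B → μ (A ∪ B) = μ A + μ B

/-- `ν` is absolutely continuous w.r.t. `μ` (ε–δ sense), `ν ≪ μ`. -/
def AbsCont (𝒜 : Set (Set X)) (ν μ : Set X → ℝ) : Prop :=
  ∀ ε : ℝ, 0 < ε → ∃ δ : ℝ, 0 < δ ∧ ∀ A ∈ 𝒜, μ A < δ → ν A < ε

/-- `ν` is weakly absolutely continuous w.r.t. `μ`, `ν ≺ μ`. -/
def WeakAbsCont (𝒜 : Set (Set X)) (ν μ : Set X → ℝ) : Prop :=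
  ∀ A ∈ 𝒜, μ A = 0 → ν A = 0

/-- `μ` and `ν` are singular, `μ ⊥ ν`. -/
def Sing (𝒜 : Set (Set X)) (μ ν : Set X → ℝ) : Prop :=
  ∀ ε : ℝ, 0 < ε → ∃ D ∈ 𝒜, μ D < ε ∧ ν Dᶜ < ε

/-- `μ` and `ν` are strongly singular. -/
def StrongSing (𝒜 : Set (Set X)) (μ ν : Set X → ℝ) : Prop :=
  ∃ D ∈ 𝒜, μ D = 0 ∧ ν Dᶜ = 0

/-- The additive property of a charge: for every `ε > 0` and every increasing
sequence `Aᵢ` in `𝒜` there is `B ∈ 𝒜` with `μ B ≤ lim_i μ (A i) + ε` and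
`μ (A i \ B) = 0` for all `i`. -/
def HasAdditiveProperty (𝒜 : Set (Set X)) (μ : Set X → ℝ) : Prop :=
  ∀ ε : ℝ, 0 < ε → ∀ A : ℕ → Set X, (∀ i, A i ∈ 𝒜) → Monotone A →
    ∃ B ∈ 𝒜, ∃ L : ℝ, Tendsto (fun i => μ (A i)) atTop (𝓝 L) ∧
      μ B ≤ L + ε ∧ ∀ i, μ (A i \ B) = 0

/-- The support of a Borel measure: points all of whose open neighborhoods
have positive measure. -/
def msupp {F : Type*} [TopologicalSpace F] [MeasurableSpace F] (m : Measure F) : Set F :=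
  {x | ∀ U : Set F, IsOpen U → x ∈ U → 0 < m U}

/-!
Clopen subsets of `F` are exactly the sets `φ A`, so `ν ≪ μ` is the ε–δ absolute continuity of
`ν̂` with respect to `μ̂` tested on clopen sets. In a compact Hausdorff totally disconnected space
every compact set inside an open set `U` can be enlarged to a clopen set inside `U`, so by
regularity (outer for `μ̂`, inner for `ν̂`) the clopen ε–δ condition forces `ν̂ ≪ μ̂`. Conversely,
if `ν̂ ≪ μ̂` then `ν̂` has a `μ̂`-integrable Radon–Nikodym density, whose integral is uniformly
small on all sets of small `μ̂`-measure.
-/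

open scoped ENNReal

/-- `ENNReal.ofReal` clamps negative values to `0`; this is harmless here because all the
thresholds `ε`, `δ` are positive. -/
lemma absCont_iff_forall_ofReal_lt (𝒜 : Set (Set X)) (ν μ : Set X → ℝ) :
    AbsCont 𝒜 ν μ ↔ ∀ ε : ℝ≥0∞, 0 < ε → ∃ δ : ℝ≥0∞, 0 < δ ∧
      ∀ A ∈ 𝒜, ENNReal.ofReal (μ A) < δ → ENNReal.ofReal (ν A) < ε := by
  constructor
  · intro h ε hε
    obtain ⟨r, -, hr, hrε⟩ := ENNReal.lt_iff_exists_real_btwn.1 hε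
    obtain ⟨δ, hδ, hδr⟩ := h r (ENNReal.ofReal_pos.1 hr)
    refine ⟨ENNReal.ofReal δ, ENNReal.ofReal_pos.2 hδ, fun A hA hμA => ?_⟩
    have hνA := hδr A hA ((ENNReal.ofReal_lt_ofReal_iff hδ).1 hμA)
    exact ((ENNReal.ofReal_lt_ofReal_iff (ENNReal.ofReal_pos.1 hr)).2 hνA).trans hrε
  · intro h ε hε
    obtain ⟨δ, hδ, hδε⟩ := h (ENNReal.ofReal ε) (ENNReal.ofReal_pos.2 hε)
    obtain ⟨r, -, hr, hrδ⟩ := ENNReal.lt_iff_exists_real_btwn.1 hδ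
    have hr₀ : 0 < r := ENNReal.ofReal_pos.1 hr
    refine ⟨r, hr₀, fun A hA hμA => ?_⟩
    have hνA := hδε A hA (((ENNReal.ofReal_lt_ofReal_iff hr₀).2 hμA).trans hrδ)
    exact (ENNReal.ofReal_lt_ofReal_iff hε).1 hνA

section StoneSpace

variable {F : Type*} [TopologicalSpace F] [MeasurableSpace F]

lemma absCont_iff_forall_isClopen {𝒜 : Set (Set X)} {μ ν : Set X → ℝ} {φ : Set X → Set F}
    (hφ_clopen : ∀ A ∈ 𝒜, IsClopen (φ A)) (hφ_surj : ∀ C : Set F, IsClopen C → ∃ A ∈ 𝒜, φ A = C)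
    {m n : Measure F} (hm : ∀ A ∈ 𝒜, m (φ A) = ENNReal.ofReal (μ A))
    (hn : ∀ A ∈ 𝒜, n (φ A) = ENNReal.ofReal (ν A)) :
    AbsCont 𝒜 ν μ ↔ ∀ ε : ℝ≥0∞, 0 < ε → ∃ δ : ℝ≥0∞, 0 < δ ∧
      ∀ C : Set F, IsClopen C → m C < δ → n C < ε := by
  have forall_isClopen (P : Set F → Prop) : (∀ C, IsClopen C → P C) ↔ ∀ A ∈ 𝒜, P (φ A) :=
    ⟨fun h A hA => h _ (hφ_clopen A hA), fun h C hC => by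
      obtain ⟨A, hA, rfl⟩ := hφ_surj C hC
      exact h A hA⟩
  rw [absCont_iff_forall_ofReal_lt]
  refine forall₂_congr fun ε _ => exists_congr fun δ => and_congr_right fun _ => ?_
  rw [forall_isClopen]
  exact forall₂_congr fun A hA => by rw [hm A hA, hn A hA]

variable [CompactSpace F] [T2Space F] [TotallyDisconnectedSpace F] {m n : Measure F}

lemma IsOpen.exists_lt_isClopen [n.Regular] {U : Set F} (hU : IsOpen U) {r : ℝ≥0∞}
    (hr : r < n U) : ∃ C ⊆ U, IsClopen C ∧ r < n C := by
  obtain ⟨K, hKU, hK, hrK⟩ := hU.exists_lt_isCompact hr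
  obtain ⟨C, hC, hKC, hCU⟩ := exists_clopen_of_closed_subset_open hK.isClosed hU hKU
  exact ⟨C, hCU, hC, hrK.trans_le (measure_mono hKC)⟩

lemma MeasureTheory.Measure.absolutelyContinuous_of_forall_isClopen [m.OuterRegular] [n.Regular]
    (h : ∀ ε : ℝ≥0∞, 0 < ε → ∃ δ : ℝ≥0∞, 0 < δ ∧ ∀ C : Set F, IsClopen C → m C < δ → n C < ε) :
    n ≪ m := by
  intro E hE
  refine nonpos_iff_eq_zero.1 (le_of_forall_gt_imp_ge_of_dense fun ε hε => ?_)
  obtain ⟨δ, hδ, hδε⟩ := h ε hε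
  obtain ⟨U, hEU, hU, hUδ⟩ := E.exists_isOpen_lt_of_lt δ (hE ▸ hδ)
  refine (measure_mono hEU).trans (not_lt.1 fun hεU => ?_)
  obtain ⟨C, hCU, hC, hεC⟩ := hU.exists_lt_isClopen hεU
  exact (hδε C hC ((measure_mono hCU).trans_lt hUδ)).not_gt hεC

end StoneSpace

lemma MeasureTheory.Measure.AbsolutelyContinuous.exists_pos_forall_lt {α : Type*}
    [MeasurableSpace α] {m n : Measure α} [IsFiniteMeasure n] [SigmaFinite m] (h : n ≪ m)
    {ε : ℝ≥0∞} (hε : 0 < ε) :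
    ∃ δ : ℝ≥0∞, 0 < δ ∧ ∀ s, m s < δ → n s < ε := by
  have hfin : ∫⁻ x, n.rnDeriv m x ∂m ≠ ∞ := by
    rw [← setLIntegral_univ, Measure.setLIntegral_rnDeriv h]
    exact measure_ne_top n _
  obtain ⟨δ, hδ, hδε⟩ := exists_pos_setLIntegral_lt_of_measure_lt hfin hε.ne'
  exact ⟨δ, hδ, fun s hs => Measure.setLIntegral_rnDeriv h s ▸ hδε s hs⟩

theorem absCont_iff_stone_weakAbsCont_general
    {F : Type*} [TopologicalSpace F] [CompactSpace F] [T2Space F]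
    [TotallyDisconnectedSpace F] [MeasurableSpace F]
    (𝒜 : Set (Set X))
    (μ ν : Set X → ℝ)
    (φ : Set X → Set F)
    (hφ_clopen : ∀ A ∈ 𝒜, IsClopen (φ A))
    (hφ_surj : ∀ C : Set F, IsClopen C → ∃ A ∈ 𝒜, φ A = C)
    (μhat νhat : Measure F)
    [μhat.Regular] [νhat.Regular]
    (hμhat : ∀ A ∈ 𝒜, μhat (φ A) = ENNReal.ofReal (μ A))
    (hνhat : ∀ A ∈ 𝒜, νhat (φ A) = ENNReal.ofReal (ν A)) :
    AbsCont 𝒜 ν μ ↔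
      ∀ E : Set F, MeasurableSet E → μhat E = 0 → νhat E = 0 := by
  rw [absCont_iff_forall_isClopen hφ_clopen hφ_surj hμhat hνhat]
  constructor
  · exact fun h E _ hE => Measure.absolutelyContinuous_of_forall_isClopen h hE
  · intro h ε hε
    obtain ⟨δ, hδ, hδε⟩ := (Measure.AbsolutelyContinuous.mk h).exists_pos_forall_lt hε
    exact ⟨δ, hδ, fun C _ => hδε C⟩

/-- `ν ≪ μ` iff the Stone extension `ν̂` vanishes on all `μ̂`-null Borel sets. -/
theorem absCont_iff_stone_weakAbsCont
    {F : Type*} [TopologicalSpace F] [CompactSpace F] [T2Space F]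
    [TotallyDisconnectedSpace F] [Nonempty F] [MeasurableSpace F] [BorelSpace F]
    (𝒜 : Set (Set X)) (h𝒜 : IsSetField 𝒜)
    (μ ν : Set X → ℝ) (hμ : IsCharge 𝒜 μ) (hν : IsCharge 𝒜 ν)
    (φ : Set X → Set F)
    (hφ_inj : ∀ A ∈ 𝒜, ∀ B ∈ 𝒜, φ A = φ B → A = B)
    (hφ_clopen : ∀ A ∈ 𝒜, IsClopen (φ A))
    (hφ_surj : ∀ C : Set F, IsClopen C → ∃ A ∈ 𝒜, φ A = C)
    (hφ_empty : φ ∅ = ∅)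
    (hφ_univ : φ Set.univ = Set.univ)
    (hφ_union : ∀ A ∈ 𝒜, ∀ B ∈ 𝒜, φ (A ∪ B) = φ A ∪ φ B)
    (hφ_compl : ∀ A ∈ 𝒜, φ Aᶜ = (φ A)ᶜ)
    (μhat νhat : Measure F)
    [IsFiniteMeasure μhat] [μhat.Regular] [IsFiniteMeasure νhat] [νhat.Regular]
    (hμhat : ∀ A ∈ 𝒜, μhat (φ A) = ENNReal.ofReal (μ A))
    (hνhat : ∀ A ∈ 𝒜, νhat (φ A) = ENNReal.ofReal (ν A)) :
    AbsCont 𝒜 ν μ ↔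
      ∀ E : Set F, MeasurableSet E → μhat E = 0 → νhat E = 0 :=
  absCont_iff_stone_weakAbsCont_general 𝒜 μ ν φ hφ_clopen hφ_surj μhat νhat hμhat hνhat
end

section
/- Let μ and ν be charges on 𝒜 and let μ̂ and ν̂ be their Stone extensions. Then ν is weakly absolutely continuous with respect to μ (ν ≺ μ) if and only if supp ν ⊆ supp μ, where supp μ is the set of points x ∈ F all of whose open neighborhoods have positive μ̂-measure (and likewise for supp ν). -/
open Filter Topology MeasureTheory

variable {X : Type*}

/-!
Clopen sets form a basis of the Stone space `F`, so the support of a Borel measure on `F` is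
determined by which clopen sets it charges; in particular `supp ν̂ ⊆ supp μ̂` says exactly that
every `μ̂`-null clopen set is `ν̂`-null (a clopen set missing `supp ν̂` is compact, hence covered
by finitely many `ν̂`-null open sets). Under `φ`, the clopen sets and their `μ̂`, `ν̂`-masses are
the sets of `𝒜` and their `μ`, `ν`-masses, which turns this into `ν ≺ μ`.
-/

section Support

variable {F : Type*} [TopologicalSpace F] [MeasurableSpace F]

theorem IsCompact.measure_eq_zero_of_disjoint_msupp {m : Measure F} {K : Set F}
    (hK : IsCompact K) (hKm : Disjoint K (msupp m)) : m K = 0 := by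
  refine hK.measure_zero_of_nhdsWithin fun x hxK => ?_
  have hx : x ∉ msupp m := hKm.notMem_of_mem_left hxK
  simp only [msupp, Set.mem_ofPred_eq, not_forall, not_lt, nonpos_iff_eq_zero] at hx
  obtain ⟨U, hU, hxU, hU0⟩ := hx
  exact ⟨U, mem_nhdsWithin_of_mem_nhds (hU.mem_nhds hxU), hU0⟩

variable [CompactSpace F] [T2Space F] [TotallyDisconnectedSpace F]

theorem mem_msupp_iff_forall_isClopen {m : Measure F} {x : F} :
    x ∈ msupp m ↔ ∀ C, IsClopen C → x ∈ C → 0 < m C := by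
  refine ⟨fun hx C hC hxC => hx C hC.isOpen hxC, fun hx U hU hxU => ?_⟩
  obtain ⟨C, hC, hxC, hCU⟩ := compact_exists_isClopen_in_isOpen hU hxU
  exact (hx C hC hxC).trans_le (measure_mono hCU)

theorem msupp_subset_msupp_iff {m n : Measure F} :
    msupp n ⊆ msupp m ↔ ∀ C, IsClopen C → m C = 0 → n C = 0 := by
  refine ⟨fun hsupp C hC hmC => ?_, fun hnull x hx => ?_⟩
  · refine hC.isClosed.isCompact.measure_eq_zero_of_disjoint_msupp ?_
    refine Set.disjoint_right.2 fun x hx hxC => ?_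
    exact (hsupp hx C hC.isOpen hxC).ne' hmC
  · rw [mem_msupp_iff_forall_isClopen] at hx ⊢
    exact fun C hC hxC => pos_iff_ne_zero.2 fun hmC => (hx C hC hxC).ne' (hnull C hC hmC)

end Support

variable {𝒜 : Set (Set X)} {μ : Set X → ℝ} {A : Set X}

theorem IsCharge.ofReal_eq_zero_iff (hμ : IsCharge 𝒜 μ) (hA : A ∈ 𝒜) :
    ENNReal.ofReal (μ A) = 0 ↔ μ A = 0 := by
  rw [ENNReal.ofReal_eq_zero, (hμ.2.1 A hA).ge_iff_eq']

theorem weakAbsCont_iff_forall_isClopen {F : Type*} [TopologicalSpace F] [MeasurableSpace F]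
    {ν : Set X → ℝ} (hμ : IsCharge 𝒜 μ) (hν : IsCharge 𝒜 ν) {φ : Set X → Set F}
    (hφ_clopen : ∀ A ∈ 𝒜, IsClopen (φ A)) (hφ_surj : ∀ C : Set F, IsClopen C → ∃ A ∈ 𝒜, φ A = C)
    {μhat νhat : Measure F} (hμhat : ∀ A ∈ 𝒜, μhat (φ A) = ENNReal.ofReal (μ A))
    (hνhat : ∀ A ∈ 𝒜, νhat (φ A) = ENNReal.ofReal (ν A)) :
    WeakAbsCont 𝒜 ν μ ↔ ∀ C, IsClopen C → μhat C = 0 → νhat C = 0 := by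
  have hnull : ∀ A ∈ 𝒜, (μhat (φ A) = 0 → νhat (φ A) = 0) ↔ (μ A = 0 → ν A = 0) :=
    fun A hA => by rw [hμhat A hA, hνhat A hA, hμ.ofReal_eq_zero_iff hA, hν.ofReal_eq_zero_iff hA]
  refine ⟨fun h C hC => ?_, fun h A hA => (hnull A hA).1 (h _ (hφ_clopen A hA))⟩
  obtain ⟨A, hA, rfl⟩ := hφ_surj C hC
  exact (hnull A hA).2 (h A hA)

theorem weakAbsCont_iff_supp_subset_general
    {F : Type*} [TopologicalSpace F] [CompactSpace F] [T2Space F]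
    [TotallyDisconnectedSpace F] [MeasurableSpace F]
    (𝒜 : Set (Set X))
    (μ ν : Set X → ℝ) (hμ : IsCharge 𝒜 μ) (hν : IsCharge 𝒜 ν)
    (φ : Set X → Set F)
    (hφ_clopen : ∀ A ∈ 𝒜, IsClopen (φ A))
    (hφ_surj : ∀ C : Set F, IsClopen C → ∃ A ∈ 𝒜, φ A = C)
    (μhat νhat : Measure F)
    (hμhat : ∀ A ∈ 𝒜, μhat (φ A) = ENNReal.ofReal (μ A))
    (hνhat : ∀ A ∈ 𝒜, νhat (φ A) = ENNReal.ofReal (ν A)) :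
    WeakAbsCont 𝒜 ν μ ↔ msupp νhat ⊆ msupp μhat := by
  rw [weakAbsCont_iff_forall_isClopen hμ hν hφ_clopen hφ_surj hμhat hνhat, msupp_subset_msupp_iff]

/-- `ν ≺ μ` iff `supp ν ⊆ supp μ` in the Stone space. -/
theorem weakAbsCont_iff_supp_subset
    {F : Type*} [TopologicalSpace F] [CompactSpace F] [T2Space F]
    [TotallyDisconnectedSpace F] [Nonempty F] [MeasurableSpace F] [BorelSpace F]
    (𝒜 : Set (Set X)) (h𝒜 : IsSetField 𝒜)
    (μ ν : Set X → ℝ) (hμ : IsCharge 𝒜 μ) (hν : IsCharge 𝒜 ν)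
    (φ : Set X → Set F)
    (hφ_inj : ∀ A ∈ 𝒜, ∀ B ∈ 𝒜, φ A = φ B → A = B)
    (hφ_clopen : ∀ A ∈ 𝒜, IsClopen (φ A))
    (hφ_surj : ∀ C : Set F, IsClopen C → ∃ A ∈ 𝒜, φ A = C)
    (hφ_empty : φ ∅ = ∅)
    (hφ_univ : φ Set.univ = Set.univ)
    (hφ_union : ∀ A ∈ 𝒜, ∀ B ∈ 𝒜, φ (A ∪ B) = φ A ∪ φ B)
    (hφ_compl : ∀ A ∈ 𝒜, φ Aᶜ = (φ A)ᶜ)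
    (μhat νhat : Measure F)
    [IsFiniteMeasure μhat] [μhat.Regular] [IsFiniteMeasure νhat] [νhat.Regular]
    (hμhat : ∀ A ∈ 𝒜, μhat (φ A) = ENNReal.ofReal (μ A))
    (hνhat : ∀ A ∈ 𝒜, νhat (φ A) = ENNReal.ofReal (ν A)) :
    WeakAbsCont 𝒜 ν μ ↔ msupp νhat ⊆ msupp μhat :=
  weakAbsCont_iff_supp_subset_general 𝒜 μ ν hμ hν φ hφ_clopen hφ_surj μhat νhat hμhat hνhat
end

section
/- Let μ and ν be charges on 𝒜 and let μ̂ and ν̂ be their Stone extensions. Then μ and ν are singular (μ ⊥ ν) if and only if μ̂ and ν̂ are strongly singular as measures, i.e., there exists a Borel set E ⊆ F with μ̂(E) = 0 and ν̂(F \ E) = 0. -/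
/-!
Both sides are equivalent to the existence, for every `ε > 0`, of a clopen `C` with
`μ̂ C < ε` and `ν̂ Cᶜ < ε`; via `φ` this is exactly `μ ⊥ ν`. Given such clopens `C n` for
`ε = 2⁻ⁿ`, the set `E = limsup C n` is `μ̂`-null and `Eᶜ ⊆ limsup (C n)ᶜ` is `ν̂`-null by
Borel–Cantelli. Conversely, outer regularity puts `E` between a closed set `Vᶜ` and an open set
`U` with `μ̂ U, ν̂ V < ε`, and in a Stone space a clopen set fits between them.
-/

open Filter Topology MeasureTheory

variable {X : Type*}

open scoped ENNReal

def ClopenSing {F : Type*} [TopologicalSpace F] [MeasurableSpace F] (m₁ m₂ : Measure F) :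
    Prop :=
  ∀ ε : ℝ, 0 < ε → ∃ C, IsClopen C ∧ m₁ C < ENNReal.ofReal ε ∧ m₂ Cᶜ < ENNReal.ofReal ε

theorem exists_null_and_compl_null_of_tsum_ne_top {Ω : Type*} [MeasurableSpace Ω]
    {m₁ m₂ : Measure Ω} {s : ℕ → Set Ω} (hs : ∀ n, MeasurableSet (s n))
    (h₁ : ∑' n, m₁ (s n) ≠ ∞) (h₂ : ∑' n, m₂ (s n)ᶜ ≠ ∞) :
    ∃ E, MeasurableSet E ∧ m₁ E = 0 ∧ m₂ Eᶜ = 0 := by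
  refine ⟨limsup s atTop, .measurableSet_limsup hs, measure_limsup_atTop_eq_zero h₁, ?_⟩
  have hcompl : (limsup s atTop)ᶜ ≤ limsup (compl ∘ s) atTop :=
    limsup_compl atTop s ▸ liminf_le_limsup
  exact measure_mono_null hcompl (measure_limsup_atTop_eq_zero h₂)

theorem ClopenSing.exists_null_and_compl_null {F : Type*} [TopologicalSpace F]
    [MeasurableSpace F] [OpensMeasurableSpace F] {m₁ m₂ : Measure F} (h : ClopenSing m₁ m₂) :
    ∃ E, MeasurableSet E ∧ m₁ E = 0 ∧ m₂ Eᶜ = 0 := by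
  choose C hC h₁ h₂ using fun n : ℕ => h ((1 / 2) ^ n) (by positivity)
  have hgeom : ∑' n : ℕ, ENNReal.ofReal ((1 / 2) ^ n) ≠ ∞ := by
    rw [← ENNReal.ofReal_tsum_of_nonneg (fun n => by positivity) summable_geometric_two]
    exact ENNReal.ofReal_ne_top
  exact exists_null_and_compl_null_of_tsum_ne_top (fun n => (hC n).isOpen.measurableSet)
    (ne_top_of_le_ne_top hgeom (ENNReal.tsum_le_tsum fun n => (h₁ n).le))
    (ne_top_of_le_ne_top hgeom (ENNReal.tsum_le_tsum fun n => (h₂ n).le))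

theorem clopenSing_of_null_of_compl_null {F : Type*} [TopologicalSpace F] [CompactSpace F]
    [T2Space F] [TotallyDisconnectedSpace F] [MeasurableSpace F] {m₁ m₂ : Measure F}
    [m₁.OuterRegular] [m₂.OuterRegular] {E : Set F} (h₁ : m₁ E = 0) (h₂ : m₂ Eᶜ = 0) :
    ClopenSing m₁ m₂ := by
  intro ε hε
  have hε' : 0 < ENNReal.ofReal ε := ENNReal.ofReal_pos.2 hε
  obtain ⟨U, hEU, hU, hU₁⟩ := E.exists_isOpen_lt_of_lt _ (h₁ ▸ hε')
  obtain ⟨V, hEV, hV, hV₂⟩ := Eᶜ.exists_isOpen_lt_of_lt _ (h₂ ▸ hε')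
  obtain ⟨C, hC, hVC, hCU⟩ := exists_clopen_of_closed_subset_open hV.isClosed_compl hU
    ((Set.compl_subset_comm.1 hEV).trans hEU)
  exact ⟨C, hC, (measure_mono hCU).trans_lt hU₁,
    (measure_mono (Set.compl_subset_comm.1 hVC)).trans_lt hV₂⟩

theorem sing_iff_clopenSing {F : Type*} [TopologicalSpace F] [MeasurableSpace F]
    {𝒜 : Set (Set X)} (h𝒜 : ∀ A ∈ 𝒜, Aᶜ ∈ 𝒜) {μ ν : Set X → ℝ} {φ : Set X → Set F}
    (hφ_clopen : ∀ A ∈ 𝒜, IsClopen (φ A)) (hφ_surj : ∀ C : Set F, IsClopen C → ∃ A ∈ 𝒜, φ A = C)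
    (hφ_compl : ∀ A ∈ 𝒜, φ Aᶜ = (φ A)ᶜ) {m₁ m₂ : Measure F}
    (hm₁ : ∀ A ∈ 𝒜, m₁ (φ A) = ENNReal.ofReal (μ A))
    (hm₂ : ∀ A ∈ 𝒜, m₂ (φ A) = ENNReal.ofReal (ν A)) :
    Sing 𝒜 μ ν ↔ ClopenSing m₁ m₂ := by
  refine forall₂_congr fun ε hε => ?_
  have h₁ : ∀ A ∈ 𝒜, m₁ (φ A) < ENNReal.ofReal ε ↔ μ A < ε := fun A hA => by
    rw [hm₁ A hA, ENNReal.ofReal_lt_ofReal_iff hε]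
  have h₂ : ∀ A ∈ 𝒜, m₂ (φ A)ᶜ < ENNReal.ofReal ε ↔ ν Aᶜ < ε := fun A hA => by
    rw [← hφ_compl A hA, hm₂ _ (h𝒜 A hA), ENNReal.ofReal_lt_ofReal_iff hε]
  constructor
  · rintro ⟨D, hD, hμD, hνD⟩
    exact ⟨φ D, hφ_clopen D hD, (h₁ D hD).2 hμD, (h₂ D hD).2 hνD⟩
  · rintro ⟨C, hC, hμC, hνC⟩
    obtain ⟨A, hA, rfl⟩ := hφ_surj C hC
    exact ⟨A, hA, (h₁ A hA).1 hμC, (h₂ A hA).1 hνC⟩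

theorem singular_iff_stone_stronglySingular_general
    {F : Type*} [TopologicalSpace F] [CompactSpace F] [T2Space F]
    [TotallyDisconnectedSpace F] [MeasurableSpace F] [BorelSpace F]
    (𝒜 : Set (Set X)) (h𝒜 : IsSetField 𝒜)
    (μ ν : Set X → ℝ)
    (φ : Set X → Set F)
    (hφ_clopen : ∀ A ∈ 𝒜, IsClopen (φ A))
    (hφ_surj : ∀ C : Set F, IsClopen C → ∃ A ∈ 𝒜, φ A = C)
    (hφ_compl : ∀ A ∈ 𝒜, φ Aᶜ = (φ A)ᶜ)
    (μhat νhat : Measure F)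
    [μhat.Regular] [νhat.Regular]
    (hμhat : ∀ A ∈ 𝒜, μhat (φ A) = ENNReal.ofReal (μ A))
    (hνhat : ∀ A ∈ 𝒜, νhat (φ A) = ENNReal.ofReal (ν A)) :
    Sing 𝒜 μ ν ↔
      ∃ E : Set F, MeasurableSet E ∧ μhat E = 0 ∧ νhat Eᶜ = 0 := by
  rw [sing_iff_clopenSing h𝒜.2.2.1 hφ_clopen hφ_surj hφ_compl hμhat hνhat]
  exact ⟨ClopenSing.exists_null_and_compl_null,
    fun ⟨_, _, h₁, h₂⟩ => clopenSing_of_null_of_compl_null h₁ h₂⟩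

/-- `μ ⊥ ν` iff the Stone extensions `μ̂` and `ν̂` are strongly singular. -/
theorem singular_iff_stone_stronglySingular
    {F : Type*} [TopologicalSpace F] [CompactSpace F] [T2Space F]
    [TotallyDisconnectedSpace F] [Nonempty F] [MeasurableSpace F] [BorelSpace F]
    (𝒜 : Set (Set X)) (h𝒜 : IsSetField 𝒜)
    (μ ν : Set X → ℝ) (hμ : IsCharge 𝒜 μ) (hν : IsCharge 𝒜 ν)
    (φ : Set X → Set F)
    (hφ_inj : ∀ A ∈ 𝒜, ∀ B ∈ 𝒜, φ A = φ B → A = B)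
    (hφ_clopen : ∀ A ∈ 𝒜, IsClopen (φ A))
    (hφ_surj : ∀ C : Set F, IsClopen C → ∃ A ∈ 𝒜, φ A = C)
    (hφ_empty : φ ∅ = ∅)
    (hφ_univ : φ Set.univ = Set.univ)
    (hφ_union : ∀ A ∈ 𝒜, ∀ B ∈ 𝒜, φ (A ∪ B) = φ A ∪ φ B)
    (hφ_compl : ∀ A ∈ 𝒜, φ Aᶜ = (φ A)ᶜ)
    (μhat νhat : Measure F)
    [IsFiniteMeasure μhat] [μhat.Regular] [IsFiniteMeasure νhat] [νhat.Regular]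
    (hμhat : ∀ A ∈ 𝒜, μhat (φ A) = ENNReal.ofReal (μ A))
    (hνhat : ∀ A ∈ 𝒜, νhat (φ A) = ENNReal.ofReal (ν A)) :
    Sing 𝒜 μ ν ↔
      ∃ E : Set F, MeasurableSet E ∧ μhat E = 0 ∧ νhat Eᶜ = 0 :=
  singular_iff_stone_stronglySingular_general 𝒜 h𝒜 μ ν φ hφ_clopen hφ_surj hφ_compl μhat νhat hμhat
    hνhat
end

section
/- Let μ and ν be charges on 𝒜 and let μ̂ and ν̂ be their Stone extensions. Then μ and ν are strongly singular (there exists D ∈ 𝒜 with μ(D) = 0 and ν(X \ D) = 0) if and only if supp μ ∩ supp ν = ∅, where supp μ is the set of points x ∈ F all of whose open neighborhoods have positive μ̂-measure (and likewise for supp ν). -/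
open Filter Topology MeasureTheory

variable {X : Type*}

lemma msupp_compl_isOpen {F : Type*} [TopologicalSpace F] [MeasurableSpace F]
    (m : Measure F) : IsOpen (msupp m)ᶜ := by
  rw [isOpen_iff_forall_mem_open]
  intro x hx
  simp only [msupp, Set.mem_compl_iff, Set.mem_setOf_eq, not_forall] at hx
  obtain ⟨U, hUo, hxU, hU0⟩ := hx
  refine ⟨U, ?_, hUo, hxU⟩
  intro y hy hymem
  exact (hymem U hUo hy).ne' (by simpa using hU0)

lemma msupp_closed {F : Type*} [TopologicalSpace F] [MeasurableSpace F]
    (m : Measure F) : IsClosed (msupp m) := by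
  rw [← isOpen_compl_iff]; exact msupp_compl_isOpen m

lemma msupp_compl_mem {F : Type*} [TopologicalSpace F] [MeasurableSpace F]
    (m : Measure F) : ∀ x ∈ (msupp m)ᶜ, ∃ U : Set F, IsOpen U ∧ x ∈ U ∧ m U = 0 := by
  intro x hx
  simp only [msupp, Set.mem_compl_iff, Set.mem_setOf_eq, not_forall] at hx
  obtain ⟨U, hUo, hxU, hU0⟩ := hx
  exact ⟨U, hUo, hxU, by simpa using hU0⟩

lemma msupp_compl_null {F : Type*} [TopologicalSpace F] [CompactSpace F]
    [MeasurableSpace F] (m : Measure F) [m.Regular] : m (msupp m)ᶜ = 0 := by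
  by_contra h
  have hpos : 0 < m (msupp m)ᶜ := pos_iff_ne_zero.mpr h
  obtain ⟨K, hKsub, hKc, hKpos⟩ :=
    (msupp_compl_isOpen m).exists_lt_isCompact hpos
  classical
  choose! U hUo hUx hU0 using msupp_compl_mem m
  obtain ⟨t, htcov⟩ := hKc.elim_nhds_subcover' (fun x hx => U x)
    (fun x hx => (hUo x (hKsub hx)).mem_nhds (hUx x (hKsub hx)))
  have : m K = 0 := by
    refine measure_mono_null htcov ?_
    refine (measure_biUnion_null_iff t.countable_toSet).mpr ?_
    intro x hx
    exact hU0 x (hKsub x.2)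
  exact absurd this hKpos.ne'

/-- `μ` and `ν` are strongly singular iff `supp μ ∩ supp ν = ∅` in the Stone space. -/
theorem stronglySingular_iff_supp_disjoint
    {F : Type*} [TopologicalSpace F] [CompactSpace F] [T2Space F]
    [TotallyDisconnectedSpace F] [Nonempty F] [MeasurableSpace F] [BorelSpace F]
    (𝒜 : Set (Set X)) (h𝒜 : IsSetField 𝒜)
    (μ ν : Set X → ℝ) (hμ : IsCharge 𝒜 μ) (hν : IsCharge 𝒜 ν)
    (φ : Set X → Set F)
    (hφ_inj : ∀ A ∈ 𝒜, ∀ B ∈ 𝒜, φ A = φ B → A = B)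
    (hφ_clopen : ∀ A ∈ 𝒜, IsClopen (φ A))
    (hφ_surj : ∀ C : Set F, IsClopen C → ∃ A ∈ 𝒜, φ A = C)
    (hφ_empty : φ ∅ = ∅)
    (hφ_univ : φ Set.univ = Set.univ)
    (hφ_union : ∀ A ∈ 𝒜, ∀ B ∈ 𝒜, φ (A ∪ B) = φ A ∪ φ B)
    (hφ_compl : ∀ A ∈ 𝒜, φ Aᶜ = (φ A)ᶜ)
    (μhat νhat : Measure F)
    [IsFiniteMeasure μhat] [μhat.Regular] [IsFiniteMeasure νhat] [νhat.Regular]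
    (hμhat : ∀ A ∈ 𝒜, μhat (φ A) = ENNReal.ofReal (μ A))
    (hνhat : ∀ A ∈ 𝒜, νhat (φ A) = ENNReal.ofReal (ν A)) :
    StrongSing 𝒜 μ ν ↔ msupp μhat ∩ msupp νhat = ∅ := by
  constructor
  · rintro ⟨D, hD, hμD, hνD⟩
    ext x
    simp only [Set.mem_inter_iff, Set.mem_empty_iff_false, iff_false, not_and]
    intro hxμ hxν
    by_cases hx : x ∈ φ D
    · have := hxμ (φ D) (hφ_clopen D hD).2 hx
      rw [hμhat D hD, hμD] at this
      simp at this
    · have hxc : x ∈ φ Dᶜ := by rw [hφ_compl D hD]; exact hx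
      have := hxν (φ Dᶜ) (hφ_clopen Dᶜ (h𝒜.2.2.1 D hD)).2 hxc
      rw [hνhat Dᶜ (h𝒜.2.2.1 D hD), hνD] at this
      simp at this
  · intro hdisj
    classical
    have hSν_comp : IsCompact (msupp νhat) := (msupp_closed νhat).isCompact
    have hopen : IsOpen (msupp μhat)ᶜ := msupp_compl_isOpen μhat
    have hsub : msupp νhat ⊆ (msupp μhat)ᶜ := by
      intro x hx hx'
      have hmem : x ∈ msupp μhat ∩ msupp νhat := ⟨hx', hx⟩
      rw [hdisj] at hmem
      exact hmem
    choose! V hV1 hV2 hV3 using fun (x : F) (hx : x ∈ (msupp μhat)ᶜ) =>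
      compact_exists_isClopen_in_isOpen hopen hx
    obtain ⟨t, htcov⟩ := hSν_comp.elim_nhds_subcover' (fun x hx => V x)
      (fun x hx => ((hV1 x (hsub hx)).2).mem_nhds (hV2 x (hsub hx)))
    set C : Set F := ⋃ x ∈ t, V (x : F) with hCdef
    have hC : IsClopen C :=
      isClopen_biUnion_finset (fun x hx => hV1 x (hsub x.2))
    have hνC : msupp νhat ⊆ C := htcov
    have hCμ : C ⊆ (msupp μhat)ᶜ :=
      Set.iUnion₂_subset fun x hx => hV3 x (hsub x.2)
    obtain ⟨A, hA, hφA⟩ := hφ_surj C hC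
    have hAc : Aᶜ ∈ 𝒜 := h𝒜.2.2.1 A hA
    refine ⟨A, hA, ?_, ?_⟩
    · have h0 : μhat (φ A) = 0 := by
        rw [hφA]
        exact measure_mono_null hCμ (msupp_compl_null μhat)
      rw [hμhat A hA] at h0
      have := hμ.2.1 A hA
      simpa [ENNReal.ofReal_eq_zero] using le_antisymm (by
        exact_mod_cast (ENNReal.ofReal_eq_zero.mp h0)) this
    · have h0 : νhat (φ Aᶜ) = 0 := by
        rw [hφ_compl A hA, hφA]
        refine measure_mono_null ?_ (msupp_compl_null νhat)
        exact Set.compl_subset_compl.mpr hνC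
      rw [hνhat Aᶜ hAc] at h0
      have := hν.2.1 Aᶜ hAc
      exact le_antisymm (ENNReal.ofReal_eq_zero.mp h0) this
end

section
/- (Lebesgue decomposition for charges.) For any charges μ and ν on a field 𝒜 of subsets of X, there exist charges ν₁ and ν₂ on 𝒜 such that ν = ν₁ + ν₂ (pointwise on 𝒜), ν₁ is absolutely continuous with respect to μ (ν₁ ≪ μ), and ν₂ and μ are singular (ν₂ ⊥ μ); moreover, such a decomposition is unique: if ν = ν₁' + ν₂' with ν₁' ≪ μ and ν₂' ⊥ μ, then ν₁' = ν₁ and ν₂' = ν₂. -/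
open Filter Topology MeasureTheory

variable {X : Type*}

section LebAux
variable {𝒜 : Set (Set X)} {μ ν : Set X → ℝ}

lemma setField_inter (h : IsSetField 𝒜) {A B : Set X} (hA : A ∈ 𝒜) (hB : B ∈ 𝒜) :
    A ∩ B ∈ 𝒜 := by
  have h1 := h.2.2.2 _ (h.2.2.1 _ hA) _ (h.2.2.1 _ hB)
  have h2 := h.2.2.1 _ h1
  simpa [Set.compl_union] using h2

lemma setField_diff (h : IsSetField 𝒜) {A B : Set X} (hA : A ∈ 𝒜) (hB : B ∈ 𝒜) :
    A \ B ∈ 𝒜 := by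
  have := setField_inter h hA (h.2.2.1 _ hB)
  simpa [Set.diff_eq] using this

lemma charge_mono (h𝒜 : IsSetField 𝒜) (hν : IsCharge 𝒜 ν) {A B : Set X}
    (hA : A ∈ 𝒜) (hB : B ∈ 𝒜) (hAB : A ⊆ B) : ν A ≤ ν B := by
  have hD : B \ A ∈ 𝒜 := setField_diff h𝒜 hB hA
  have h1 : ν B = ν A + ν (B \ A) := by
    conv_lhs => rw [← Set.union_diff_cancel hAB]
    exact hν.2.2 _ hA _ hD disjoint_sdiff_self_right
  linarith [hν.2.1 _ hD]

lemma charge_subadd (h𝒜 : IsSetField 𝒜) (hμ : IsCharge 𝒜 μ) {A B : Set X}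
    (hA : A ∈ 𝒜) (hB : B ∈ 𝒜) : μ (A ∪ B) ≤ μ A + μ B := by
  have hD : B \ A ∈ 𝒜 := setField_diff h𝒜 hB hA
  have h1 : μ (A ∪ B) = μ A + μ (B \ A) := by
    rw [← Set.union_diff_self]
    exact hμ.2.2 _ hA _ hD disjoint_sdiff_self_right
  have := charge_mono h𝒜 hμ hD hB Set.diff_subset
  linarith

noncomputable def sdel (𝒜 : Set (Set X)) (μ ν : Set X → ℝ) (δ : ℝ) (A : Set X) : ℝ :=
  sSup ((fun B => ν (A ∩ B)) '' {B | B ∈ 𝒜 ∧ μ B < δ})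

noncomputable def nu2 (𝒜 : Set (Set X)) (μ ν : Set X → ℝ) (A : Set X) : ℝ :=
  sInf ((fun δ => sdel 𝒜 μ ν δ A) '' Set.Ioi (0 : ℝ))


lemma sdel_ne (h𝒜 : IsSetField 𝒜) (hμ : IsCharge 𝒜 μ) {δ : ℝ} (hδ : 0 < δ) (A : Set X) :
    ((fun B => ν (A ∩ B)) '' {B | B ∈ 𝒜 ∧ μ B < δ}).Nonempty :=
  ⟨ν (A ∩ ∅), ⟨∅, ⟨h𝒜.1, by rw [hμ.1]; exact hδ⟩, rfl⟩⟩

lemma sdel_bdd (h𝒜 : IsSetField 𝒜) (hν : IsCharge 𝒜 ν) {δ : ℝ} {A : Set X} (hA : A ∈ 𝒜) :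
    BddAbove ((fun B => ν (A ∩ B)) '' {B | B ∈ 𝒜 ∧ μ B < δ}) := by
  refine ⟨ν A, ?_⟩
  rintro x ⟨B, ⟨hB, -⟩, rfl⟩
  exact charge_mono h𝒜 hν (setField_inter h𝒜 hA hB) hA Set.inter_subset_left

lemma le_sdel (h𝒜 : IsSetField 𝒜) (hν : IsCharge 𝒜 ν) {δ : ℝ} {A B : Set X}
    (hA : A ∈ 𝒜) (hB : B ∈ 𝒜) (hμB : μ B < δ) : ν (A ∩ B) ≤ sdel 𝒜 μ ν δ A :=
  le_csSup (sdel_bdd h𝒜 hν hA) ⟨B, ⟨hB, hμB⟩, rfl⟩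

lemma sdel_le (h𝒜 : IsSetField 𝒜) (hμ : IsCharge 𝒜 μ) {δ : ℝ} (hδ : 0 < δ)
    {A : Set X} {c : ℝ} (h : ∀ B ∈ 𝒜, μ B < δ → ν (A ∩ B) ≤ c) : sdel 𝒜 μ ν δ A ≤ c := by
  refine csSup_le (sdel_ne h𝒜 hμ hδ A) ?_
  rintro x ⟨B, ⟨hB, hμB⟩, rfl⟩
  exact h B hB hμB

lemma sdel_nonneg (h𝒜 : IsSetField 𝒜) (hμ : IsCharge 𝒜 μ) (hν : IsCharge 𝒜 ν)
    {δ : ℝ} (hδ : 0 < δ) {A : Set X} (hA : A ∈ 𝒜) : 0 ≤ sdel 𝒜 μ ν δ A := by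
  have := le_sdel (μ := μ) h𝒜 hν hA h𝒜.1 (by rw [hμ.1]; exact hδ)
  simpa [hν.1] using this

lemma sdel_le_nu (h𝒜 : IsSetField 𝒜) (hμ : IsCharge 𝒜 μ) (hν : IsCharge 𝒜 ν)
    {δ : ℝ} (hδ : 0 < δ) {A : Set X} (hA : A ∈ 𝒜) : sdel 𝒜 μ ν δ A ≤ ν A :=
  sdel_le h𝒜 hμ hδ fun B hB _ =>
    charge_mono h𝒜 hν (setField_inter h𝒜 hA hB) hA Set.inter_subset_left

lemma sdel_mono (h𝒜 : IsSetField 𝒜) (hμ : IsCharge 𝒜 μ) (hν : IsCharge 𝒜 ν)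
    {δ δ' : ℝ} (hδ : 0 < δ) (hδδ : δ ≤ δ') {A : Set X} (hA : A ∈ 𝒜) :
    sdel 𝒜 μ ν δ A ≤ sdel 𝒜 μ ν δ' A :=
  sdel_le h𝒜 hμ hδ fun B hB hμB => le_sdel h𝒜 hν hA hB (lt_of_lt_of_le hμB hδδ)

lemma nu2_ne (A : Set X) : ((fun δ => sdel 𝒜 μ ν δ A) '' Set.Ioi (0 : ℝ)).Nonempty :=
  ⟨_, ⟨1, by norm_num, rfl⟩⟩

lemma nu2_bdd (h𝒜 : IsSetField 𝒜) (hμ : IsCharge 𝒜 μ) (hν : IsCharge 𝒜 ν)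
    {A : Set X} (hA : A ∈ 𝒜) : BddBelow ((fun δ => sdel 𝒜 μ ν δ A) '' Set.Ioi (0 : ℝ)) := by
  refine ⟨0, ?_⟩
  rintro x ⟨δ, hδ, rfl⟩
  exact sdel_nonneg h𝒜 hμ hν hδ hA

lemma nu2_le_sdel (h𝒜 : IsSetField 𝒜) (hμ : IsCharge 𝒜 μ) (hν : IsCharge 𝒜 ν)
    {δ : ℝ} (hδ : 0 < δ) {A : Set X} (hA : A ∈ 𝒜) : nu2 𝒜 μ ν A ≤ sdel 𝒜 μ ν δ A :=
  csInf_le (nu2_bdd h𝒜 hμ hν hA) ⟨δ, hδ, rfl⟩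

lemma le_nu2 {A : Set X} {c : ℝ} (h : ∀ δ : ℝ, 0 < δ → c ≤ sdel 𝒜 μ ν δ A) :
    c ≤ nu2 𝒜 μ ν A :=
  le_csInf (nu2_ne A) (by rintro x ⟨δ, hδ, rfl⟩; exact h δ hδ)

lemma nu2_nonneg (h𝒜 : IsSetField 𝒜) (hμ : IsCharge 𝒜 μ) (hν : IsCharge 𝒜 ν)
    {A : Set X} (hA : A ∈ 𝒜) : 0 ≤ nu2 𝒜 μ ν A :=
  le_nu2 fun δ hδ => sdel_nonneg h𝒜 hμ hν hδ hA

lemma nu2_le_nu (h𝒜 : IsSetField 𝒜) (hμ : IsCharge 𝒜 μ) (hν : IsCharge 𝒜 ν)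
    {A : Set X} (hA : A ∈ 𝒜) : nu2 𝒜 μ ν A ≤ ν A :=
  le_trans (nu2_le_sdel h𝒜 hμ hν one_pos hA) (sdel_le_nu h𝒜 hμ hν one_pos hA)

lemma exists_sdel_lt (h𝒜 : IsSetField 𝒜) (hμ : IsCharge 𝒜 μ) (hν : IsCharge 𝒜 ν)
    {A : Set X} (hA : A ∈ 𝒜) {ε : ℝ} (hε : 0 < ε) :
    ∃ δ : ℝ, 0 < δ ∧ sdel 𝒜 μ ν δ A < nu2 𝒜 μ ν A + ε := by
  obtain ⟨x, ⟨δ, hδ, rfl⟩, hx⟩ := Real.lt_sInf_add_pos (nu2_ne (𝒜 := 𝒜) (μ := μ) (ν := ν) A) hε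
  exact ⟨δ, hδ, hx⟩

lemma exists_lt_sdel (h𝒜 : IsSetField 𝒜) (hμ : IsCharge 𝒜 μ) (hν : IsCharge 𝒜 ν)
    {δ : ℝ} (hδ : 0 < δ) {A : Set X} (hA : A ∈ 𝒜) {ε : ℝ} (hε : 0 < ε) :
    ∃ B ∈ 𝒜, μ B < δ ∧ sdel 𝒜 μ ν δ A - ε < ν (A ∩ B) := by
  obtain ⟨x, ⟨B, ⟨hB, hμB⟩, rfl⟩, hx⟩ :=
    Real.add_neg_lt_sSup (sdel_ne (ν := ν) h𝒜 hμ hδ A) (by linarith : -ε < 0)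
  simp only at hx
  exact ⟨B, hB, hμB, by simp only [sdel]; linarith⟩

lemma nu2_empty (h𝒜 : IsSetField 𝒜) (hμ : IsCharge 𝒜 μ) (hν : IsCharge 𝒜 ν) :
    nu2 𝒜 μ ν ∅ = 0 := by
  refine le_antisymm ?_ (nu2_nonneg h𝒜 hμ hν h𝒜.1)
  refine le_trans (nu2_le_sdel h𝒜 hμ hν one_pos h𝒜.1) ?_
  refine sdel_le h𝒜 hμ one_pos fun B hB _ => ?_
  simp [hν.1]

lemma nu2_add (h𝒜 : IsSetField 𝒜) (hμ : IsCharge 𝒜 μ) (hν : IsCharge 𝒜 ν)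
    {A B : Set X} (hA : A ∈ 𝒜) (hB : B ∈ 𝒜) (hAB : Disjoint A B) :
    nu2 𝒜 μ ν (A ∪ B) = nu2 𝒜 μ ν A + nu2 𝒜 μ ν B := by
  have hAB𝒜 : A ∪ B ∈ 𝒜 := h𝒜.2.2.2 _ hA _ hB
  refine le_antisymm ?_ ?_
  · -- ≤ : suffices ∀ ε > 0
    refine le_of_forall_pos_le_add fun ε hε => ?_
    obtain ⟨δ₁, hδ₁, h1⟩ := exists_sdel_lt h𝒜 hμ hν hA (half_pos hε)
    obtain ⟨δ₂, hδ₂, h2⟩ := exists_sdel_lt h𝒜 hμ hν hB (half_pos hε)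
    set δ := min δ₁ δ₂ with hδdef
    have hδ : 0 < δ := lt_min hδ₁ hδ₂
    have key : sdel 𝒜 μ ν δ (A ∪ B) ≤ sdel 𝒜 μ ν δ A + sdel 𝒜 μ ν δ B := by
      refine sdel_le h𝒜 hμ hδ fun C hC hμC => ?_
      have e : (A ∪ B) ∩ C = (A ∩ C) ∪ (B ∩ C) := Set.union_inter_distrib_right A B C
      rw [e, hν.2.2 _ (setField_inter h𝒜 hA hC) _ (setField_inter h𝒜 hB hC)
        (hAB.mono Set.inter_subset_left Set.inter_subset_left)]
      exact add_le_add (le_sdel h𝒜 hν hA hC hμC) (le_sdel h𝒜 hν hB hC hμC)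
    have k1 : sdel 𝒜 μ ν δ A ≤ sdel 𝒜 μ ν δ₁ A := sdel_mono h𝒜 hμ hν hδ (min_le_left _ _) hA
    have k2 : sdel 𝒜 μ ν δ B ≤ sdel 𝒜 μ ν δ₂ B := sdel_mono h𝒜 hμ hν hδ (min_le_right _ _) hB
    have := nu2_le_sdel h𝒜 hμ hν hδ hAB𝒜
    linarith
  · -- ≥
    refine le_of_forall_pos_le_add fun ε hε => ?_
    obtain ⟨δ, hδ, hδlt⟩ := exists_sdel_lt h𝒜 hμ hν hAB𝒜 (by linarith : (0:ℝ) < ε/3)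
    obtain ⟨C₁, hC₁, hμC₁, h1⟩ := exists_lt_sdel h𝒜 hμ hν (half_pos hδ) hA (by linarith : (0:ℝ) < ε/3)
    obtain ⟨C₂, hC₂, hμC₂, h2⟩ := exists_lt_sdel h𝒜 hμ hν (half_pos hδ) hB (by linarith : (0:ℝ) < ε/3)
    have hC : C₁ ∪ C₂ ∈ 𝒜 := h𝒜.2.2.2 _ hC₁ _ hC₂
    have hμC : μ (C₁ ∪ C₂) < δ := by
      have := charge_subadd h𝒜 hμ hC₁ hC₂; linarith
    have hsub : (A ∩ C₁) ∪ (B ∩ C₂) ⊆ (A ∪ B) ∩ (C₁ ∪ C₂) := by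
      intro x hx; rcases hx with hx | hx
      · exact ⟨Or.inl hx.1, Or.inl hx.2⟩
      · exact ⟨Or.inr hx.1, Or.inr hx.2⟩
    have hdisj : Disjoint (A ∩ C₁) (B ∩ C₂) :=
      hAB.mono Set.inter_subset_left Set.inter_subset_left
    have hmem1 : A ∩ C₁ ∈ 𝒜 := setField_inter h𝒜 hA hC₁
    have hmem2 : B ∩ C₂ ∈ 𝒜 := setField_inter h𝒜 hB hC₂
    have hstep : ν (A ∩ C₁) + ν (B ∩ C₂) ≤ ν ((A ∪ B) ∩ (C₁ ∪ C₂)) := by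
      rw [← hν.2.2 _ hmem1 _ hmem2 hdisj]
      exact charge_mono h𝒜 hν (h𝒜.2.2.2 _ hmem1 _ hmem2)
        (setField_inter h𝒜 hAB𝒜 hC) hsub
    have hle : ν ((A ∪ B) ∩ (C₁ ∪ C₂)) ≤ sdel 𝒜 μ ν δ (A ∪ B) :=
      le_sdel h𝒜 hν hAB𝒜 hC hμC
    have n1 : nu2 𝒜 μ ν A ≤ sdel 𝒜 μ ν (δ/2) A := nu2_le_sdel h𝒜 hμ hν (half_pos hδ) hA
    have n2 : nu2 𝒜 μ ν B ≤ sdel 𝒜 μ ν (δ/2) B := nu2_le_sdel h𝒜 hμ hν (half_pos hδ) hB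
    linarith

/-- Key inequality: if `μ A < δ` then `ν A + nu2 Aᶜ ≤ sdel δ univ`. -/
lemma key_ineq (h𝒜 : IsSetField 𝒜) (hμ : IsCharge 𝒜 μ) (hν : IsCharge 𝒜 ν)
    {δ : ℝ} {A : Set X} (hA : A ∈ 𝒜) (hμA : μ A < δ) :
    ν A + nu2 𝒜 μ ν Aᶜ ≤ sdel 𝒜 μ ν δ Set.univ := by
  have hAc : Aᶜ ∈ 𝒜 := h𝒜.2.2.1 _ hA
  have hpos : 0 < δ - μ A := by linarith [hμ.2.1 _ hA]
  have h1 : nu2 𝒜 μ ν Aᶜ ≤ sdel 𝒜 μ ν (δ - μ A) Aᶜ := nu2_le_sdel h𝒜 hμ hν hpos hAc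
  have h2 : sdel 𝒜 μ ν (δ - μ A) Aᶜ ≤ sdel 𝒜 μ ν δ Set.univ - ν A := by
    refine sdel_le h𝒜 hμ hpos fun C hC hμC => ?_
    have he : A ∪ (Aᶜ ∩ C) = A ∪ C := by
      ext x; by_cases hx : x ∈ A <;> simp [hx]
    have hd : Disjoint A (Aᶜ ∩ C) :=
      (disjoint_compl_right (a := A)).mono_right Set.inter_subset_left
    have hsum : ν (A ∪ (Aᶜ ∩ C)) = ν A + ν (Aᶜ ∩ C) :=
      hν.2.2 _ hA _ (setField_inter h𝒜 hAc hC) hd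
    have hμAC : μ (A ∪ C) < δ := by
      have := charge_subadd h𝒜 hμ hA hC; linarith
    have := le_sdel h𝒜 hν h𝒜.2.1 (h𝒜.2.2.2 _ hA _ hC) hμAC
    rw [Set.univ_inter] at this
    rw [← he] at this
    rw [hsum] at this
    linarith
  linarith

end LebAux

/-- Lebesgue decomposition for charges. -/
theorem lebesgue_decomposition_charges
    (𝒜 : Set (Set X)) (h𝒜 : IsSetField 𝒜)
    (μ ν : Set X → ℝ) (hμ : IsCharge 𝒜 μ) (hν : IsCharge 𝒜 ν) :
    ∃ ν₁ ν₂ : Set X → ℝ, IsCharge 𝒜 ν₁ ∧ IsCharge 𝒜 ν₂ ∧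
      (∀ A ∈ 𝒜, ν A = ν₁ A + ν₂ A) ∧ AbsCont 𝒜 ν₁ μ ∧ Sing 𝒜 ν₂ μ ∧
      ∀ ν₁' ν₂' : Set X → ℝ, IsCharge 𝒜 ν₁' → IsCharge 𝒜 ν₂' →
        (∀ A ∈ 𝒜, ν A = ν₁' A + ν₂' A) → AbsCont 𝒜 ν₁' μ → Sing 𝒜 ν₂' μ →
        ∀ A ∈ 𝒜, ν₁' A = ν₁ A ∧ ν₂' A = ν₂ A := by
  classical
  set ν₂ : Set X → ℝ := nu2 𝒜 μ ν with hν₂def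
  set ν₁ : Set X → ℝ := fun A => ν A - ν₂ A with hν₁def
  have hν₂charge : IsCharge 𝒜 ν₂ :=
    ⟨nu2_empty h𝒜 hμ hν, fun A hA => nu2_nonneg h𝒜 hμ hν hA,
      fun A hA B hB hd => nu2_add h𝒜 hμ hν hA hB hd⟩
  have hν₁charge : IsCharge 𝒜 ν₁ := by
    refine ⟨?_, fun A hA => ?_, fun A hA B hB hd => ?_⟩
    · simp [hν₁def, hν.1, hν₂def, nu2_empty h𝒜 hμ hν]
    · simp only [hν₁def, sub_nonneg]
      exact nu2_le_nu h𝒜 hμ hν hA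
    · simp only [hν₁def]
      rw [hν.2.2 _ hA _ hB hd, hν₂def, nu2_add h𝒜 hμ hν hA hB hd]
      ring
  have hsum : ∀ A ∈ 𝒜, ν A = ν₁ A + ν₂ A := fun A _ => by simp [hν₁def]
  -- absolute continuity of ν₁
  have habs : AbsCont 𝒜 ν₁ μ := by
    intro ε hε
    obtain ⟨δ, hδ, hlt⟩ := exists_sdel_lt h𝒜 hμ hν h𝒜.2.1 hε
    refine ⟨δ, hδ, fun A hA hμA => ?_⟩
    have hkey := key_ineq h𝒜 hμ hν hA hμA
    have hAc : Aᶜ ∈ 𝒜 := h𝒜.2.2.1 _ hA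
    have hsplit : nu2 𝒜 μ ν Set.univ = nu2 𝒜 μ ν A + nu2 𝒜 μ ν Aᶜ := by
      rw [← Set.union_compl_self A]
      exact nu2_add h𝒜 hμ hν hA hAc disjoint_compl_right
    simp only [hν₁def, hν₂def]
    linarith
  -- singularity of ν₂
  have hsing : Sing 𝒜 ν₂ μ := by
    intro ε hε
    obtain ⟨D, hD, hμD, hνD⟩ := exists_lt_sdel h𝒜 hμ hν hε h𝒜.2.1 hε
    rw [Set.univ_inter] at hνD
    have hkey := key_ineq h𝒜 hμ hν hD hμD
    refine ⟨Dᶜ, h𝒜.2.2.1 _ hD, by simp only [hν₂def]; linarith, ?_⟩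
    rw [compl_compl]; exact hμD
  refine ⟨ν₁, ν₂, hν₁charge, hν₂charge, hsum, habs, hsing, ?_⟩
  -- uniqueness
  intro ν₁' ν₂' hν₁' hν₂' hsum' habs' hsing' A hA
  have key : ∀ ε : ℝ, 0 < ε → |ν₁' A - ν₁ A| < 2 * ε := by
    intro ε hε
    obtain ⟨δ₁, hδ₁, hd₁⟩ := habs ε hε
    obtain ⟨δ₂, hδ₂, hd₂⟩ := habs' ε hε
    set δ := min δ₁ δ₂ with hδdef
    have hδ : 0 < δ := lt_min hδ₁ hδ₂
    set ε₀ := min (δ / 2) ε with hε₀def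
    have hε₀ : 0 < ε₀ := lt_min (half_pos hδ) hε
    obtain ⟨D, hD, hν₂D, hμD⟩ := hsing ε₀ hε₀
    obtain ⟨D', hD', hν₂'D, hμD'⟩ := hsing' ε₀ hε₀
    have hDc : Dᶜ ∈ 𝒜 := h𝒜.2.2.1 _ hD
    have hD'c : D'ᶜ ∈ 𝒜 := h𝒜.2.2.1 _ hD'
    set E := Dᶜ ∪ D'ᶜ with hEdef
    have hE : E ∈ 𝒜 := h𝒜.2.2.2 _ hDc _ hD'c
    have hEc : Eᶜ ∈ 𝒜 := h𝒜.2.2.1 _ hE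
    have hEceq : Eᶜ = D ∩ D' := by simp [hEdef, Set.compl_union]
    have hμE : μ E < δ := by
      have h1 := charge_subadd h𝒜 hμ hDc hD'c
      have h2 : ε₀ ≤ δ / 2 := min_le_left _ _
      linarith
    have hν₂Ec : ν₂ Eᶜ < ε := by
      have hsub : Eᶜ ⊆ D := hEceq ▸ Set.inter_subset_left
      have := charge_mono h𝒜 hν₂charge hEc hD hsub
      have h2 : ε₀ ≤ ε := min_le_right _ _
      linarith
    have hν₂'Ec : ν₂' Eᶜ < ε := by
      have hsub : Eᶜ ⊆ D' := hEceq ▸ Set.inter_subset_right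
      have := charge_mono h𝒜 hν₂' hEc hD' hsub
      have h2 : ε₀ ≤ ε := min_le_right _ _
      linarith
    -- split A
    have hAE : A ∩ E ∈ 𝒜 := setField_inter h𝒜 hA hE
    have hAEc : A \ E ∈ 𝒜 := setField_diff h𝒜 hA hE
    have hsplit : A = (A ∩ E) ∪ (A \ E) := (Set.inter_union_diff A E).symm
    have hdisj : Disjoint (A ∩ E) (A \ E) :=
      Set.disjoint_left.mpr fun x hx hx' => hx'.2 hx.2
    have e1 : ν₁ A = ν₁ (A ∩ E) + ν₁ (A \ E) := by
      conv_lhs => rw [hsplit]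
      exact hν₁charge.2.2 _ hAE _ hAEc hdisj
    have e2 : ν₁' A = ν₁' (A ∩ E) + ν₁' (A \ E) := by
      conv_lhs => rw [hsplit]
      exact hν₁'.2.2 _ hAE _ hAEc hdisj
    have hμAE : μ (A ∩ E) < δ := lt_of_le_of_lt
      (charge_mono h𝒜 hμ hAE hE Set.inter_subset_right) hμE
    have b1 : ν₁ (A ∩ E) < ε := hd₁ _ hAE (lt_of_lt_of_le hμAE (min_le_left _ _))
    have b2 : ν₁' (A ∩ E) < ε := hd₂ _ hAE (lt_of_lt_of_le hμAE (min_le_right _ _))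
    have b1' : 0 ≤ ν₁ (A ∩ E) := hν₁charge.2.1 _ hAE
    have b2' : 0 ≤ ν₁' (A ∩ E) := hν₁'.2.1 _ hAE
    have hsubc : A \ E ⊆ Eᶜ := fun x hx => hx.2
    have c1 : ν₂ (A \ E) < ε :=
      lt_of_le_of_lt (charge_mono h𝒜 hν₂charge hAEc hEc hsubc) hν₂Ec
    have c2 : ν₂' (A \ E) < ε :=
      lt_of_le_of_lt (charge_mono h𝒜 hν₂' hAEc hEc hsubc) hν₂'Ec
    have c1' : 0 ≤ ν₂ (A \ E) := hν₂charge.2.1 _ hAEc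
    have c2' : 0 ≤ ν₂' (A \ E) := hν₂'.2.1 _ hAEc
    have ediff : ν₁' (A \ E) - ν₁ (A \ E) = ν₂ (A \ E) - ν₂' (A \ E) := by
      have h1 := hsum _ hAEc
      have h2 := hsum' _ hAEc
      linarith
    rw [abs_lt]
    constructor <;> linarith
  have h1 : ν₁' A = ν₁ A := by
    by_contra h
    have h0 : 0 < |ν₁' A - ν₁ A| := abs_pos.mpr (sub_ne_zero.mpr h)
    have := key (|ν₁' A - ν₁ A| / 4) (by linarith)
    linarith
  refine ⟨h1, ?_⟩
  have ha := hsum A hA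
  have hb := hsum' A hA
  linarith
end

section
/- (Hahn decomposition characterization of the additive property.) Let 𝒜 be a σ-algebra of subsets of X and μ a charge on 𝒜. Then μ has the additive property if and only if for every bounded finitely additive function ν : 𝒜 → ℝ (not necessarily nonnegative) which is absolutely continuous with respect to μ (for every ε > 0 there is δ > 0 such that |ν(A)| < ε whenever A ∈ 𝒜 and μ(A) < δ), there exists A ∈ 𝒜 such that ν(B) ≥ 0 for every B ∈ 𝒜 with B ⊆ A, and ν(B) ≤ 0 for every B ∈ 𝒜 with B ⊆ X \ A. -/
open Filter Topology MeasureTheory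

variable {X : Type*}

namespace HahnAux

variable {𝒜 : Set (Set X)} {μ ν : Set X → ℝ}

lemma sf_compl (h : IsSigmaField 𝒜) {A : Set X} (hA : A ∈ 𝒜) : Aᶜ ∈ 𝒜 := h.2.2.1 A hA

lemma sf_iUnion (h : IsSigmaField 𝒜) {A : ℕ → Set X} (hA : ∀ n, A n ∈ 𝒜) :
    (⋃ n, A n) ∈ 𝒜 := h.2.2.2 A hA

lemma sf_union (h : IsSigmaField 𝒜) {A B : Set X} (hA : A ∈ 𝒜) (hB : B ∈ 𝒜) :
    A ∪ B ∈ 𝒜 := by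
  have he : A ∪ B = ⋃ n : ℕ, (if n = 0 then A else B) := by
    ext x
    simp only [Set.mem_iUnion, Set.mem_union]
    constructor
    · rintro (h1 | h1)
      · exact ⟨0, by simp [h1]⟩
      · exact ⟨1, by simp [h1]⟩
    · rintro ⟨n, hn⟩
      by_cases h0 : n = 0 <;> simp [h0] at hn <;> tauto
  rw [he]
  exact sf_iUnion h (fun n => by by_cases h0 : n = 0 <;> simp [h0] <;> assumption)

lemma sf_inter (h : IsSigmaField 𝒜) {A B : Set X} (hA : A ∈ 𝒜) (hB : B ∈ 𝒜) :
    A ∩ B ∈ 𝒜 := by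
  have : A ∩ B = (Aᶜ ∪ Bᶜ)ᶜ := by simp [Set.compl_union]
  rw [this]
  exact sf_compl h (sf_union h (sf_compl h hA) (sf_compl h hB))

lemma sf_diff (h : IsSigmaField 𝒜) {A B : Set X} (hA : A ∈ 𝒜) (hB : B ∈ 𝒜) :
    A \ B ∈ 𝒜 := by
  rw [Set.diff_eq]; exact sf_inter h hA (sf_compl h hB)

lemma sf_biUnion (h : IsSigmaField 𝒜) {A : ℕ → Set X} (hA : ∀ n, A n ∈ 𝒜) (m : ℕ) :
    (⋃ k ∈ Finset.range m, A k) ∈ 𝒜 := by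
  induction m with
  | zero => simpa using h.1
  | succ m ih =>
      rw [Finset.range_add_one, Finset.set_biUnion_insert]
      exact sf_union h (hA m) ih

lemma sf_biInter (h : IsSigmaField 𝒜) {A : ℕ → Set X} (hA : ∀ n, A n ∈ 𝒜) (m : ℕ) :
    (⋂ k ∈ Finset.range m, A k) ∈ 𝒜 := by
  induction m with
  | zero => simpa using h.2.1
  | succ m ih =>
      rw [Finset.range_add_one, Finset.set_biInter_insert]
      exact sf_inter h (hA m) ih

-- charge basics
lemma ch_nonneg (hμ : IsCharge 𝒜 μ) {A : Set X} (hA : A ∈ 𝒜) : 0 ≤ μ A := hμ.2.1 A hA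

lemma ch_diff_add (hμ : IsCharge 𝒜 μ) (h : IsSigmaField 𝒜) {A B : Set X}
    (hA : A ∈ 𝒜) (hB : B ∈ 𝒜) (hAB : A ⊆ B) : μ B = μ A + μ (B \ A) := by
  have := hμ.2.2 A hA (B \ A) (sf_diff h hB hA) Set.disjoint_sdiff_right
  rwa [Set.union_diff_cancel hAB] at this

lemma ch_mono (hμ : IsCharge 𝒜 μ) (h : IsSigmaField 𝒜) {A B : Set X}
    (hA : A ∈ 𝒜) (hB : B ∈ 𝒜) (hAB : A ⊆ B) : μ A ≤ μ B := by
  have h1 := ch_diff_add hμ h hA hB hAB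
  have h2 := ch_nonneg hμ (sf_diff h hB hA)
  linarith

lemma ch_inter_add (hμ : IsCharge 𝒜 μ) (h : IsSigmaField 𝒜) {A B : Set X}
    (hA : A ∈ 𝒜) (hB : B ∈ 𝒜) : μ A = μ (A ∩ B) + μ (A \ B) := by
  have := hμ.2.2 (A ∩ B) (sf_inter h hA hB) (A \ B) (sf_diff h hA hB)
    (Set.disjoint_of_subset Set.inter_subset_right (Set.diff_subset_diff_left (le_refl A))
      Set.disjoint_sdiff_right)
  rwa [Set.inter_union_diff] at this

lemma ch_subadd (hμ : IsCharge 𝒜 μ) (h : IsSigmaField 𝒜) {A B : Set X}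
    (hA : A ∈ 𝒜) (hB : B ∈ 𝒜) : μ (A ∪ B) ≤ μ A + μ B := by
  have h1 : μ (A ∪ B) = μ A + μ ((A ∪ B) \ A) :=
    ch_diff_add hμ h hA (sf_union h hA hB) Set.subset_union_left
  have h2 : μ ((A ∪ B) \ A) ≤ μ B :=
    ch_mono hμ h (sf_diff h (sf_union h hA hB) hA) hB (by intro x hx; rcases hx.1 with hx1 | hx1
                                                          · exact absurd hx1 hx.2
                                                          · exact hx1)
  linarith

lemma ch_null_subset (hμ : IsCharge 𝒜 μ) (h : IsSigmaField 𝒜) {A B : Set X}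
    (hA : A ∈ 𝒜) (hB : B ∈ 𝒜) (hAB : A ⊆ B) (hB0 : μ B = 0) : μ A = 0 :=
  le_antisymm (by rw [← hB0]; exact ch_mono hμ h hA hB hAB) (ch_nonneg hμ hA)

lemma ch_union_null (hμ : IsCharge 𝒜 μ) (h : IsSigmaField 𝒜) {A B : Set X}
    (hA : A ∈ 𝒜) (hB : B ∈ 𝒜) (hA0 : μ A = 0) (hB0 : μ B = 0) : μ (A ∪ B) = 0 := by
  have := ch_subadd hμ h hA hB
  have := ch_nonneg hμ (sf_union h hA hB)
  linarith

lemma ch_le_univ (hμ : IsCharge 𝒜 μ) (h : IsSigmaField 𝒜) {A : Set X} (hA : A ∈ 𝒜) :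
    μ A ≤ μ Set.univ := ch_mono hμ h hA h.2.1 (Set.subset_univ A)

-- real limit helper
lemma le_of_forall_le_add_pow {a c : ℝ} (h : ∀ r : ℕ, a ≤ c + (1/2)^r) : a ≤ c := by
  refine le_of_forall_pos_le_add fun ε hε => ?_
  obtain ⟨n, hn⟩ := exists_pow_lt_of_lt_one hε (by norm_num : (1:ℝ)/2 < 1)
  have := h n
  linarith

lemma nonneg_of_forall_neg_pow {a : ℝ} (h : ∀ r : ℕ, -((1/2):ℝ)^r ≤ a) : 0 ≤ a := by
  have h2 : ∀ r : ℕ, -a ≤ 0 + (1/2)^r := fun r => by have := h r; linarith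
  have : -a ≤ 0 := le_of_forall_le_add_pow h2
  linarith


variable {N : ℕ → Set X}

section
variable (h𝒜 : IsSigmaField 𝒜) (hμ : IsCharge 𝒜 μ)
include h𝒜 hμ

lemma mono_muN (hm : Monotone N) (hN : ∀ i, N i ∈ 𝒜) :
    Monotone (fun i => μ (N i)) := fun i j hij => ch_mono hμ h𝒜 (hN i) (hN j) (hm hij)

lemma bdd_muN (hN : ∀ i, N i ∈ 𝒜) : BddAbove (Set.range (fun i => μ (N i))) :=
  ⟨μ Set.univ, by rintro x ⟨i, rfl⟩; exact ch_le_univ hμ h𝒜 (hN i)⟩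

/-- From the additive property: the bound with the supremum as limit. -/
lemma hap_spec (hadd : HasAdditiveProperty 𝒜 μ) {N : ℕ → Set X}
    (hN : ∀ i, N i ∈ 𝒜) (hm : Monotone N) {ε : ℝ} (hε : 0 < ε) :
    ∃ B ∈ 𝒜, μ B ≤ (⨆ i, μ (N i)) + ε ∧ ∀ i, μ (N i \ B) = 0 := by
  obtain ⟨B, hB, L, hL, hBL, hnull⟩ := hadd ε hε N hN hm
  have hLsup : L = ⨆ i, μ (N i) :=
    tendsto_nhds_unique hL (tendsto_atTop_ciSup (mono_muN h𝒜 hμ hm hN) (bdd_muN h𝒜 hμ hN))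
  exact ⟨B, hB, by rw [← hLsup]; exact hBL, hnull⟩

/-- Exact form of the additive property: the tight supremum. -/
lemma tight_sup (hadd : HasAdditiveProperty 𝒜 μ) {N : ℕ → Set X}
    (hN : ∀ i, N i ∈ 𝒜) (hm : Monotone N) :
    ∃ B ∈ 𝒜, μ B ≤ (⨆ i, μ (N i)) ∧ ∀ i, μ (N i \ B) = 0 := by
  classical
  set L : ℝ := ⨆ i, μ (N i) with hLdef
  have hL_ge : ∀ j, μ (N j) ≤ L := fun j => le_ciSup (bdd_muN h𝒜 hμ hN) j
  -- step 1: V k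
  have h1 : ∀ k : ℕ, ∃ V ∈ 𝒜, μ V ≤ L + (1/2)^k ∧ ∀ j, μ (N j \ V) = 0 :=
    fun k => hap_spec h𝒜 hμ hadd hN hm (pow_pos (by norm_num) k)
  choose V hVmem hVle hVnull using h1
  -- step 2: V' k := ⋂ l ∈ range (k+1), V l
  set V' : ℕ → Set X := fun k => ⋂ l ∈ Finset.range (k+1), V l with hV'def
  have hV'mem : ∀ k, V' k ∈ 𝒜 := fun k => sf_biInter h𝒜 hVmem (k+1)
  have hV'anti : ∀ k l, k ≤ l → V' l ⊆ V' k := by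
    intro k l hkl
    apply Set.biInter_mono (fun x hx => ?_) (fun x _ => le_refl _)
    exact Finset.range_subset_range.2 (by omega) hx
  have hV'subV : ∀ k, V' k ⊆ V k := fun k =>
    Set.biInter_subset_of_mem (Finset.self_mem_range_succ k)
  have hV'null : ∀ j k, μ (N j \ V' k) = 0 := by
    intro j k
    have he : N j \ V' k = ⋃ l ∈ Finset.range (k+1), (N j \ V l) := by
      ext x; simp [hV'def]
    rw [he]
    -- finite union of null sets
    have : ∀ m, μ (⋃ l ∈ Finset.range m, (N j \ V l)) = 0 := by
      intro m
      induction m with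
      | zero => simpa using hμ.1
      | succ m ih =>
          rw [Finset.range_add_one, Finset.set_biUnion_insert]
          exact ch_union_null hμ h𝒜 (sf_diff h𝒜 (hN j) (hVmem m))
            (sf_biUnion h𝒜 (fun l => sf_diff h𝒜 (hN j) (hVmem l)) m) (hVnull m j) ih
    exact this (k+1)
  have hV'le : ∀ k, μ (V' k) ≤ L + (1/2)^k := fun k =>
    le_trans (ch_mono hμ h𝒜 (hV'mem k) (hVmem k) (hV'subV k)) (hVle k)
  have hV'ge : ∀ k, L ≤ μ (V' k) := by
    intro k
    refine ciSup_le fun j => ?_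
    have h2 := ch_inter_add hμ h𝒜 (hN j) (hV'mem k)
    rw [hV'null j k] at h2
    have h3 : μ (N j ∩ V' k) ≤ μ (V' k) :=
      ch_mono hμ h𝒜 (sf_inter h𝒜 (hN j) (hV'mem k)) (hV'mem k) Set.inter_subset_right
    linarith
  -- step 3/4: apply hap to complements
  have hV'cmem : ∀ k, (V' k)ᶜ ∈ 𝒜 := fun k => sf_compl h𝒜 (hV'mem k)
  have hV'cmono : Monotone (fun k => (V' k)ᶜ) := fun k l hkl =>
    Set.compl_subset_compl.2 (hV'anti k l hkl)
  have hScle : (⨆ k, μ ((V' k)ᶜ)) ≤ μ Set.univ - L := by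
    refine ciSup_le fun k => ?_
    have h2 : μ Set.univ = μ (V' k) + μ (Set.univ \ V' k) :=
      ch_diff_add hμ h𝒜 (hV'mem k) h𝒜.2.1 (Set.subset_univ _)
    have h3 : Set.univ \ V' k = (V' k)ᶜ := by ext x; simp
    rw [h3] at h2
    have := hV'ge k
    linarith
  have h4 : ∀ i : ℕ, ∃ W ∈ 𝒜, μ W ≤ μ Set.univ - L + (1/2)^i ∧
      ∀ j, μ ((V' j)ᶜ \ W) = 0 := by
    intro i
    obtain ⟨W, hW, hWle, hWnull⟩ :=
      hap_spec h𝒜 hμ hadd hV'cmem hV'cmono (pow_pos (by norm_num : (0:ℝ) < 1/2) i)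
    exact ⟨W, hW, le_trans hWle (by linarith [hScle]), hWnull⟩
  choose W hWmem hWle hWnull using h4
  -- step 5: B i := (W i)ᶜ
  set B : ℕ → Set X := fun i => (W i)ᶜ with hBdef
  have hBmem : ∀ i, B i ∈ 𝒜 := fun i => sf_compl h𝒜 (hWmem i)
  have hBnull : ∀ i j, μ (B i \ V' j) = 0 := by
    intro i j
    have he : B i \ V' j = (V' j)ᶜ \ W i := by
      ext x; simp [hBdef]; tauto
    rw [he]; exact hWnull i j
  have hBge : ∀ i, L - (1/2)^i ≤ μ (B i) := by
    intro i
    have h2 : μ Set.univ = μ (W i) + μ (Set.univ \ W i) :=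
      ch_diff_add hμ h𝒜 (hWmem i) h𝒜.2.1 (Set.subset_univ _)
    have h3 : Set.univ \ W i = B i := by ext x; simp [hBdef]
    rw [h3] at h2
    have := hWle i
    linarith
  -- step 6: key bound μ (N j ∩ W i) ≤ (1/2)^i
  have hkey : ∀ i j, μ (N j ∩ W i) ≤ (1/2)^i := by
    intro i j
    refine le_of_forall_le_add_pow (c := (1/2)^i) fun r => ?_
    -- μ (N j ∩ W i) = μ (N j) - μ (N j ∩ B i)
    have e1 : μ (N j) = μ (N j ∩ W i) + μ (N j \ W i) :=
      ch_inter_add hμ h𝒜 (hN j) (hWmem i)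
    have e1' : N j \ W i = N j ∩ B i := by ext x; simp [hBdef]
    rw [e1'] at e1
    -- μ (B i) = μ (B i ∩ N j) + μ (B i \ N j)
    have e2 : μ (B i) = μ (B i ∩ N j) + μ (B i \ N j) :=
      ch_inter_add hμ h𝒜 (hBmem i) (hN j)
    -- μ (B i \ N j) ≤ μ (B i \ V' r) + μ (V' r \ N j) = μ(V' r) - μ(N j)
    have incl : B i \ N j ⊆ (B i \ V' r) ∪ (V' r \ N j) := by
      intro x hx
      by_cases hxV : x ∈ V' r
      · exact Or.inr ⟨hxV, hx.2⟩
      · exact Or.inl ⟨hx.1, hxV⟩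
    have e3 : μ (B i \ N j) ≤ μ (B i \ V' r) + μ (V' r \ N j) := by
      refine le_trans (ch_mono hμ h𝒜 (sf_diff h𝒜 (hBmem i) (hN j))
        (sf_union h𝒜 (sf_diff h𝒜 (hBmem i) (hV'mem r)) (sf_diff h𝒜 (hV'mem r) (hN j))) incl) ?_
      exact ch_subadd hμ h𝒜 (sf_diff h𝒜 (hBmem i) (hV'mem r)) (sf_diff h𝒜 (hV'mem r) (hN j))
    rw [hBnull i r] at e3
    -- μ (V' r \ N j) = μ (V' r) - μ (V' r ∩ N j), and μ (V' r ∩ N j) = μ (N j)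
    have e4 : μ (V' r) = μ (V' r ∩ N j) + μ (V' r \ N j) :=
      ch_inter_add hμ h𝒜 (hV'mem r) (hN j)
    have e5 : μ (N j) = μ (N j ∩ V' r) + μ (N j \ V' r) :=
      ch_inter_add hμ h𝒜 (hN j) (hV'mem r)
    rw [hV'null j r] at e5
    have e6 : V' r ∩ N j = N j ∩ V' r := Set.inter_comm _ _
    rw [e6] at e4
    -- combine
    have hBN : μ (B i ∩ N j) = μ (N j ∩ B i) := by rw [Set.inter_comm]
    have := hV'le r
    have := hBge i
    linarith
  -- step 7: E := ⋃ i, (B i ∩ V' i)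
  set E : Set X := ⋃ i, (B i ∩ V' i) with hEdef
  have hEmem : E ∈ 𝒜 := sf_iUnion h𝒜 (fun i => sf_inter h𝒜 (hBmem i) (hV'mem i))
  refine ⟨E, hEmem, ?_, ?_⟩
  · -- μ E ≤ L
    refine le_of_forall_le_add_pow fun k => ?_
    have e1 : μ E = μ (E ∩ V' k) + μ (E \ V' k) := ch_inter_add hμ h𝒜 hEmem (hV'mem k)
    have incl : E \ V' k ⊆ ⋃ i ∈ Finset.range k, (B i \ V' k) := by
      intro x hx
      obtain ⟨hxE, hxV⟩ := hx
      simp only [hEdef, Set.mem_iUnion] at hxE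
      obtain ⟨i, hxB, hxVi⟩ := hxE
      have hik : i < k := by
        by_contra hik
        exact hxV (hV'anti k i (by omega) hxVi)
      simp only [Set.mem_iUnion]
      exact ⟨i, Finset.mem_range.2 hik, hxB, hxV⟩
    have hnull2 : μ (⋃ i ∈ Finset.range k, (B i \ V' k)) = 0 := by
      have : ∀ m, μ (⋃ i ∈ Finset.range m, (B i \ V' k)) = 0 := by
        intro m
        induction m with
        | zero => simpa using hμ.1
        | succ m ih =>
            rw [Finset.range_add_one, Finset.set_biUnion_insert]
            exact ch_union_null hμ h𝒜 (sf_diff h𝒜 (hBmem m) (hV'mem k))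
              (sf_biUnion h𝒜 (fun l => sf_diff h𝒜 (hBmem l) (hV'mem k)) m) (hBnull m k) ih
      exact this k
    have e2 : μ (E \ V' k) = 0 :=
      ch_null_subset hμ h𝒜 (sf_diff h𝒜 hEmem (hV'mem k))
        (sf_biUnion h𝒜 (fun l => sf_diff h𝒜 (hBmem l) (hV'mem k)) k) incl hnull2
    have e3 : μ (E ∩ V' k) ≤ μ (V' k) :=
      ch_mono hμ h𝒜 (sf_inter h𝒜 hEmem (hV'mem k)) (hV'mem k) Set.inter_subset_right
    have := hV'le k
    linarith
  · -- nullity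
    intro j
    have hb : ∀ i : ℕ, μ (N j \ E) ≤ 0 + (1/2)^i := by
      intro i
      have incl : N j \ E ⊆ (N j ∩ W i) ∪ (N j \ V' i) := by
        intro x hx
        by_cases hxV : x ∈ V' i
        · by_cases hxW : x ∈ W i
          · exact Or.inl ⟨hx.1, hxW⟩
          · have hxE : x ∈ E := Set.mem_iUnion.2 ⟨i, Set.mem_inter hxW hxV⟩
            exact absurd hxE hx.2
        · exact Or.inr ⟨hx.1, hxV⟩
      have h5 : μ (N j \ E) ≤ μ (N j ∩ W i) + μ (N j \ V' i) := by
        refine le_trans (ch_mono hμ h𝒜 (sf_diff h𝒜 (hN j) hEmem)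
          (sf_union h𝒜 (sf_inter h𝒜 (hN j) (hWmem i)) (sf_diff h𝒜 (hN j) (hV'mem i))) incl) ?_
        exact ch_subadd hμ h𝒜 (sf_inter h𝒜 (hN j) (hWmem i)) (sf_diff h𝒜 (hN j) (hV'mem i))
      rw [hV'null j i] at h5
      have := hkey i j
      linarith
    have h6 : μ (N j \ E) ≤ 0 := le_of_forall_le_add_pow hb
    exact le_antisymm h6 (ch_nonneg hμ (sf_diff h𝒜 (hN j) hEmem))

end

section
variable (h𝒜 : IsSigmaField 𝒜) (hμ : IsCharge 𝒜 μ)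

lemma le_of_forall_le_add_pow_mul {a c σ : ℝ} (hσ : 0 < σ)
    (h : ∀ r : ℕ, a ≤ c + σ * (1/2)^r) : a ≤ c := by
  refine le_of_forall_pos_le_add fun ε hε => ?_
  obtain ⟨n, hn⟩ := exists_pow_lt_of_lt_one (div_pos hε hσ) (by norm_num : (1:ℝ)/2 < 1)
  have h2 := h n
  have h3 : σ * (1/2)^n < ε := by
    have := (lt_div_iff₀ hσ).1 hn
    nlinarith
  linarith

-- ν basics
variable {hν : Prop}

lemma nu_diff_add (h𝒜 : IsSigmaField 𝒜)
    (hνadd : ∀ A ∈ 𝒜, ∀ B ∈ 𝒜, Disjoint A B → ν (A ∪ B) = ν A + ν B)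
    {A B : Set X} (hA : A ∈ 𝒜) (hB : B ∈ 𝒜) (hAB : A ⊆ B) :
    ν B = ν A + ν (B \ A) := by
  have := hνadd A hA (B \ A) (sf_diff h𝒜 hB hA) Set.disjoint_sdiff_right
  rwa [Set.union_diff_cancel hAB] at this

lemma nu_inter_add (h𝒜 : IsSigmaField 𝒜)
    (hνadd : ∀ A ∈ 𝒜, ∀ B ∈ 𝒜, Disjoint A B → ν (A ∪ B) = ν A + ν B)
    {A B : Set X} (hA : A ∈ 𝒜) (hB : B ∈ 𝒜) :
    ν A = ν (A ∩ B) + ν (A \ B) := by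
  have := hνadd (A ∩ B) (sf_inter h𝒜 hA hB) (A \ B) (sf_diff h𝒜 hA hB)
    (Set.disjoint_of_subset Set.inter_subset_right (Set.diff_subset_diff_left (le_refl A))
      Set.disjoint_sdiff_right)
  rwa [Set.inter_union_diff] at this

lemma nu_null (hAC : ∀ ε : ℝ, 0 < ε → ∃ δ : ℝ, 0 < δ ∧ ∀ A ∈ 𝒜, μ A < δ → |ν A| < ε)
    {E : Set X} (hE : E ∈ 𝒜) (h0 : μ E = 0) : ν E = 0 := by
  by_contra hne
  have habs : 0 < |ν E| := abs_pos.2 hne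
  obtain ⟨δ, hδ, hd⟩ := hAC (|ν E|) habs
  exact absurd (hd E hE (by rw [h0]; exact hδ)) (lt_irrefl _)

include h𝒜 hμ in
/-- Stage I: an exactly nonnegative set whose complement is `σ`-almost nonpositive. -/
lemma stageI (hadd : HasAdditiveProperty 𝒜 μ)
    (hνadd : ∀ A ∈ 𝒜, ∀ B ∈ 𝒜, Disjoint A B → ν (A ∪ B) = ν A + ν B)
    {M : ℝ} (hM : ∀ A ∈ 𝒜, |ν A| ≤ M)
    (hAC : ∀ ε : ℝ, 0 < ε → ∃ δ : ℝ, 0 < δ ∧ ∀ A ∈ 𝒜, μ A < δ → |ν A| < ε)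
    {σ : ℝ} (hσ : 0 < σ) :
    ∃ P ∈ 𝒜, (∀ E ∈ 𝒜, E ⊆ P → 0 ≤ ν E) ∧ (∀ E ∈ 𝒜, E ⊆ Pᶜ → ν E ≤ σ) := by
  classical
  set α : ℝ := sSup (ν '' 𝒜) with hα
  have hne : (ν '' 𝒜).Nonempty := ⟨ν ∅, ∅, h𝒜.1, rfl⟩
  have hbdd : BddAbove (ν '' 𝒜) := ⟨M, by rintro y ⟨E, hE, rfl⟩; exact le_trans (le_abs_self _) (hM E hE)⟩
  have hle : ∀ E ∈ 𝒜, ν E ≤ α := fun E hE => le_csSup hbdd ⟨E, hE, rfl⟩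
  -- choose C k
  have hC : ∀ k : ℕ, ∃ C ∈ 𝒜, α - σ * (1/2)^(k+1) < ν C := by
    intro k
    have hlt : α - σ * (1/2)^(k+1) < α := by
      have : (0:ℝ) < σ * (1/2)^(k+1) := mul_pos hσ (pow_pos (by norm_num) _)
      linarith
    obtain ⟨y, ⟨C, hC, rfl⟩, hy⟩ := exists_lt_of_lt_csSup hne hlt
    exact ⟨C, hC, hy⟩
  choose C hCmem hCgt using hC
  -- subsets of C k : ν E > -σ(1/2)^(k+1)
  have hsubC : ∀ k, ∀ E ∈ 𝒜, E ⊆ C k → -(σ * (1/2)^(k+1)) ≤ ν E := by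
    intro k E hE hEC
    have h1 : ν (C k) = ν E + ν (C k \ E) := nu_diff_add h𝒜 hνadd hE (hCmem k) hEC
    have h2 : ν (C k \ E) ≤ α := hle _ (sf_diff h𝒜 (hCmem k) hE)
    have h3 := hCgt k
    linarith
  -- subsets of (C k)ᶜ : ν E < σ(1/2)^(k+1)
  have hsubCc : ∀ k, ∀ E ∈ 𝒜, E ⊆ (C k)ᶜ → ν E ≤ σ * (1/2)^(k+1) := by
    intro k E hE hEC
    have hdisj : Disjoint E (C k) := by
      rw [Set.disjoint_left]; intro x hx; exact hEC hx
    have h1 : ν (E ∪ C k) = ν E + ν (C k) := hνadd E hE (C k) (hCmem k) hdisj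
    have h2 : ν (E ∪ C k) ≤ α := hle _ (sf_union h𝒜 hE (hCmem k))
    have h3 := hCgt k
    linarith
  -- H m
  set H : ℕ → Set X := fun m => ⋃ k ∈ Finset.range (m+1), (C k)ᶜ with hHdef
  have hHmem : ∀ m, H m ∈ 𝒜 := fun m => sf_biUnion h𝒜 (fun k => sf_compl h𝒜 (hCmem k)) (m+1)
  have hHmono : Monotone H := by
    intro m l hml
    apply Set.biUnion_mono (fun x hx => Finset.range_subset_range.2 (by omega) hx) (fun x _ => le_refl _)
  have hHsucc : ∀ m, H (m+1) = (C (m+1))ᶜ ∪ H m := by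
    intro m
    rw [hHdef]
    show (⋃ k ∈ Finset.range (m+1+1), (C k)ᶜ) = _
    rw [Finset.range_add_one, Finset.set_biUnion_insert]
  -- bound on H m subsets
  have hboundH : ∀ m, ∀ E ∈ 𝒜, E ⊆ H m → ν E ≤ ∑ k ∈ Finset.range (m+1), σ * (1/2)^(k+1) := by
    intro m
    induction m with
    | zero =>
        intro E hE hEH
        have h0 : H 0 = (C 0)ᶜ := by
          rw [hHdef]; simp
        rw [h0] at hEH
        simpa using hsubCc 0 E hE hEH
    | succ m ih =>
        intro E hE hEH
        have hsplit : ν E = ν (E ∩ H m) + ν (E \ H m) := nu_inter_add h𝒜 hνadd hE (hHmem m)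
        have h1 : ν (E ∩ H m) ≤ ∑ k ∈ Finset.range (m+1), σ * (1/2)^(k+1) :=
          ih (E ∩ H m) (sf_inter h𝒜 hE (hHmem m)) Set.inter_subset_right
        have h2 : E \ H m ⊆ (C (m+1))ᶜ := by
          intro x hx
          have := hEH hx.1
          rw [hHsucc m] at this
          rcases this with h | h
          · exact h
          · exact absurd h hx.2
        have h3 : ν (E \ H m) ≤ σ * (1/2)^(m+1+1) :=
          hsubCc (m+1) _ (sf_diff h𝒜 hE (hHmem m)) h2
        rw [Finset.range_add_one, Finset.sum_insert (by simp)]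
        linarith
  -- sum bound
  have hsum : ∀ m : ℕ, (∑ k ∈ Finset.range m, σ * (1/2)^(k+1)) ≤ σ := by
    intro m
    have h1 : (∑ k ∈ Finset.range m, σ * (1/2)^(k+1))
        = (σ/2) * ∑ k ∈ Finset.range m, ((1:ℝ)/2)^k := by
      rw [Finset.mul_sum]
      refine Finset.sum_congr rfl fun k _ => ?_
      rw [pow_succ]; ring
    rw [h1]
    have h2 := sum_geometric_two_le m
    nlinarith
  -- tight sup on H
  obtain ⟨B, hBmem, hBle, hBnull⟩ := tight_sup h𝒜 hμ hadd hHmem hHmono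
  set LH : ℝ := ⨆ m, μ (H m) with hLH
  refine ⟨Bᶜ, sf_compl h𝒜 hBmem, ?_, ?_⟩
  · -- exactly nonnegative on subsets of Bᶜ
    intro E hE hEB
    have key : ∀ m : ℕ, -(σ * (1/2)^(m+1)) ≤ ν E := by
      intro m
      have hsplit : ν E = ν (E ∩ H m) + ν (E \ H m) := nu_inter_add h𝒜 hνadd hE (hHmem m)
      have hsubHB : E ∩ H m ⊆ H m \ B := fun x hx => ⟨hx.2, fun hxB => (hEB hx.1) hxB⟩
      have h0 : μ (E ∩ H m) = 0 :=
        ch_null_subset hμ h𝒜 (sf_inter h𝒜 hE (hHmem m)) (sf_diff h𝒜 (hHmem m) hBmem) hsubHB (hBnull m)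
      have hν0' : ν (E ∩ H m) = 0 := nu_null hAC (sf_inter h𝒜 hE (hHmem m)) h0
      have hsub : E \ H m ⊆ C m := by
        intro x hx
        by_contra hxc
        exact hx.2 (Set.mem_biUnion (Finset.self_mem_range_succ m) hxc)
      have := hsubC m _ (sf_diff h𝒜 hE (hHmem m)) hsub
      linarith
    -- conclude 0 ≤ ν E
    have h2 : ∀ r : ℕ, -(ν E) ≤ 0 + σ * (1/2)^r := by
      intro r
      have := key r
      have hp : σ * (1/2)^(r+1) ≤ σ * (1/2)^r := by
        have : ((1:ℝ)/2)^(r+1) ≤ (1/2)^r :=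
          pow_le_pow_of_le_one (by norm_num) (by norm_num) (by omega)
        nlinarith
      linarith
    have := le_of_forall_le_add_pow_mul hσ h2
    linarith
  · -- ≤ σ on subsets of B
    intro E hE hEB
    rw [compl_compl] at hEB
    refine le_of_forall_pos_le_add fun η hη => ?_
    obtain ⟨δ, hδ, hACδ⟩ := hAC η hη
    -- find m with LH - δ < μ (H m)
    have hlt : LH - δ < LH := by linarith
    have hlt2 : LH - δ < ⨆ m, μ (H m) := by rw [← hLH]; exact hlt
    obtain ⟨m, hm⟩ := exists_lt_of_lt_ciSup hlt2
    have hsplit : ν E = ν (E ∩ H m) + ν (E \ H m) := nu_inter_add h𝒜 hνadd hE (hHmem m)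
    have h1 : ν (E ∩ H m) ≤ σ :=
      le_trans (hboundH m _ (sf_inter h𝒜 hE (hHmem m)) Set.inter_subset_right) (hsum (m+1))
    -- μ (E \ H m) < δ
    have h2 : μ (E \ H m) ≤ μ B - μ (H m) := by
      have e1 : μ B = μ (B ∩ H m) + μ (B \ H m) := ch_inter_add hμ h𝒜 hBmem (hHmem m)
      have e2 : μ (H m) = μ (H m ∩ B) + μ (H m \ B) := ch_inter_add hμ h𝒜 (hHmem m) hBmem
      rw [hBnull m] at e2
      have e3 : μ (E \ H m) ≤ μ (B \ H m) :=
        ch_mono hμ h𝒜 (sf_diff h𝒜 hE (hHmem m)) (sf_diff h𝒜 hBmem (hHmem m))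
          (Set.diff_subset_diff_left hEB)
      have e4 : B ∩ H m = H m ∩ B := Set.inter_comm _ _
      rw [e4] at e1
      linarith
    have h3 : μ (E \ H m) < δ := by linarith [hBle]
    have h4 : |ν (E \ H m)| < η := hACδ _ (sf_diff h𝒜 hE (hHmem m)) h3
    have h5 : ν (E \ H m) ≤ |ν (E \ H m)| := le_abs_self _
    linarith

end

/-- Forward direction: additive property gives Hahn decompositions. -/
lemma forward_dir (h𝒜 : IsSigmaField 𝒜) (hμ : IsCharge 𝒜 μ)
    (hadd : HasAdditiveProperty 𝒜 μ) (ν : Set X → ℝ) (hν0 : ν ∅ = 0)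
    (hνadd : ∀ A ∈ 𝒜, ∀ B ∈ 𝒜, Disjoint A B → ν (A ∪ B) = ν A + ν B)
    (hMex : ∃ M : ℝ, ∀ A ∈ 𝒜, |ν A| ≤ M)
    (hAC : ∀ ε : ℝ, 0 < ε → ∃ δ : ℝ, 0 < δ ∧ ∀ A ∈ 𝒜, μ A < δ → |ν A| < ε) :
    ∃ A ∈ 𝒜, (∀ B ∈ 𝒜, B ⊆ A → 0 ≤ ν B) ∧ ∀ B ∈ 𝒜, B ⊆ Aᶜ → ν B ≤ 0 := by
  classical
  obtain ⟨M, hM⟩ := hMex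
  have stage : ∀ j : ℕ, ∃ P ∈ 𝒜, (∀ E ∈ 𝒜, E ⊆ P → 0 ≤ ν E) ∧
      (∀ E ∈ 𝒜, E ⊆ Pᶜ → ν E ≤ (1/2)^j) :=
    fun j => stageI h𝒜 hμ hadd hνadd hM hAC (pow_pos (by norm_num : (0:ℝ) < 1/2) j)
  choose P hP using stage
  have hPmem : ∀ j, P j ∈ 𝒜 := fun j => (hP j).1
  have hPpos : ∀ j, ∀ E ∈ 𝒜, E ⊆ P j → 0 ≤ ν E := fun j => (hP j).2.1
  have hPneg : ∀ j, ∀ E ∈ 𝒜, E ⊆ (P j)ᶜ → ν E ≤ (1/2)^j := fun j => (hP j).2.2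
  set N : ℕ → Set X := fun j => ⋃ k ∈ Finset.range (j+1), P k with hNdef
  have hNmem : ∀ j, N j ∈ 𝒜 := fun j => sf_biUnion h𝒜 hPmem (j+1)
  have hNmono : Monotone N := by
    intro m l hml
    apply Set.biUnion_mono (fun x hx => Finset.range_subset_range.2 (by omega) hx) (fun x _ => le_refl _)
  have hNsucc : ∀ j, N (j+1) = P (j+1) ∪ N j := by
    intro j
    rw [hNdef]
    show (⋃ k ∈ Finset.range (j+1+1), P k) = _
    rw [Finset.range_add_one, Finset.set_biUnion_insert]
  have hNpos : ∀ j, ∀ E ∈ 𝒜, E ⊆ N j → 0 ≤ ν E := by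
    intro j
    induction j with
    | zero =>
        intro E hE hEN
        have h0 : N 0 = P 0 := by rw [hNdef]; simp
        rw [h0] at hEN
        exact hPpos 0 E hE hEN
    | succ j ih =>
        intro E hE hEN
        have hsplit : ν E = ν (E ∩ N j) + ν (E \ N j) := nu_inter_add h𝒜 hνadd hE (hNmem j)
        have h1 : 0 ≤ ν (E ∩ N j) := ih _ (sf_inter h𝒜 hE (hNmem j)) Set.inter_subset_right
        have h2 : E \ N j ⊆ P (j+1) := by
          intro x hx
          have := hEN hx.1
          rw [hNsucc j] at this
          rcases this with h | h
          · exact h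
          · exact absurd h hx.2
        have h3 : 0 ≤ ν (E \ N j) := hPpos (j+1) _ (sf_diff h𝒜 hE (hNmem j)) h2
        linarith
  have hPsubN : ∀ j, P j ⊆ N j := fun j x hx =>
    Set.mem_biUnion (Finset.self_mem_range_succ j) hx
  have hNneg : ∀ j, ∀ E ∈ 𝒜, E ⊆ (N j)ᶜ → ν E ≤ (1/2)^j := fun j E hE hEN =>
    hPneg j E hE (le_trans hEN (Set.compl_subset_compl.2 (hPsubN j)))
  -- tight sup
  obtain ⟨B, hBmem, hBle, hBnull⟩ := tight_sup h𝒜 hμ hadd hNmem hNmono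
  refine ⟨B, hBmem, ?_, ?_⟩
  · -- subsets of B are nonnegative
    intro E hE hEB
    have key : ∀ η : ℝ, 0 < η → -(ν E) ≤ 0 + η := by
      intro η hη
      obtain ⟨δ, hδ, hACδ⟩ := hAC η hη
      have hlt2 : (⨆ j, μ (N j)) - δ < ⨆ j, μ (N j) := by linarith
      obtain ⟨j, hj⟩ := exists_lt_of_lt_ciSup hlt2
      have hsplit : ν E = ν (E ∩ N j) + ν (E \ N j) := nu_inter_add h𝒜 hνadd hE (hNmem j)
      have h1 : 0 ≤ ν (E ∩ N j) := hNpos j _ (sf_inter h𝒜 hE (hNmem j)) Set.inter_subset_right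
      have h2 : μ (E \ N j) ≤ μ B - μ (N j) := by
        have e1 : μ B = μ (B ∩ N j) + μ (B \ N j) := ch_inter_add hμ h𝒜 hBmem (hNmem j)
        have e2 : μ (N j) = μ (N j ∩ B) + μ (N j \ B) := ch_inter_add hμ h𝒜 (hNmem j) hBmem
        rw [hBnull j] at e2
        have e3 : μ (E \ N j) ≤ μ (B \ N j) :=
          ch_mono hμ h𝒜 (sf_diff h𝒜 hE (hNmem j)) (sf_diff h𝒜 hBmem (hNmem j))
            (Set.diff_subset_diff_left hEB)
        have e4 : B ∩ N j = N j ∩ B := Set.inter_comm _ _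
        rw [e4] at e1
        linarith
      have h3 : μ (E \ N j) < δ := by linarith [hBle]
      have h4 : |ν (E \ N j)| < η := hACδ _ (sf_diff h𝒜 hE (hNmem j)) h3
      have h5 : -|ν (E \ N j)| ≤ ν (E \ N j) := neg_abs_le _
      linarith
    have := le_of_forall_pos_le_add key
    linarith
  · -- subsets of Bᶜ are nonpositive
    intro E hE hEB
    have key : ∀ j : ℕ, ν E ≤ 0 + (1/2)^j := by
      intro j
      have hsplit : ν E = ν (E ∩ N j) + ν (E \ N j) := nu_inter_add h𝒜 hνadd hE (hNmem j)
      have hsub : E ∩ N j ⊆ N j \ B := fun x hx => ⟨hx.2, fun hxB => (hEB hx.1) hxB⟩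
      have h0 : μ (E ∩ N j) = 0 :=
        ch_null_subset hμ h𝒜 (sf_inter h𝒜 hE (hNmem j)) (sf_diff h𝒜 (hNmem j) hBmem)
          hsub (hBnull j)
      have h1 : ν (E ∩ N j) = 0 := nu_null hAC (sf_inter h𝒜 hE (hNmem j)) h0
      have h2 : E \ N j ⊆ (N j)ᶜ := fun x hx => hx.2
      have h3 : ν (E \ N j) ≤ (1/2)^j := hNneg j _ (sf_diff h𝒜 hE (hNmem j)) h2
      linarith
    have := le_of_forall_le_add_pow key
    linarith

/-- Backward direction. -/
lemma backward_dir (h𝒜 : IsSigmaField 𝒜) (hμ : IsCharge 𝒜 μ)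
    (hH : ∀ ν : Set X → ℝ, ν ∅ = 0 →
        (∀ A ∈ 𝒜, ∀ B ∈ 𝒜, Disjoint A B → ν (A ∪ B) = ν A + ν B) →
        (∃ M : ℝ, ∀ A ∈ 𝒜, |ν A| ≤ M) →
        (∀ ε : ℝ, 0 < ε → ∃ δ : ℝ, 0 < δ ∧ ∀ A ∈ 𝒜, μ A < δ → |ν A| < ε) →
        ∃ A ∈ 𝒜, (∀ B ∈ 𝒜, B ⊆ A → 0 ≤ ν B) ∧ ∀ B ∈ 𝒜, B ⊆ Aᶜ → ν B ≤ 0) :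
    HasAdditiveProperty 𝒜 μ := by
  classical
  intro ε hε A hA hmono
  set lam : Set X → ℝ := fun E => ⨆ j, μ (E ∩ A j) with hlamdef
  have hEAmem : ∀ E ∈ 𝒜, ∀ j : ℕ, E ∩ A j ∈ 𝒜 := fun E hE j => sf_inter h𝒜 hE (hA j)
  have hmonoj : ∀ E ∈ 𝒜, Monotone (fun j => μ (E ∩ A j)) := by
    intro E hE i j hij
    exact ch_mono hμ h𝒜 (hEAmem E hE i) (hEAmem E hE j)
      (Set.inter_subset_inter_right E (hmono hij))
  have hbddj : ∀ E ∈ 𝒜, BddAbove (Set.range (fun j => μ (E ∩ A j))) := by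
    intro E hE
    exact ⟨μ Set.univ, by rintro x ⟨j, rfl⟩; exact ch_le_univ hμ h𝒜 (hEAmem E hE j)⟩
  have htend : ∀ E ∈ 𝒜, Tendsto (fun j => μ (E ∩ A j)) atTop (𝓝 (lam E)) :=
    fun E hE => tendsto_atTop_ciSup (hmonoj E hE) (hbddj E hE)
  have hlam_le : ∀ E ∈ 𝒜, lam E ≤ μ E := by
    intro E hE
    exact ciSup_le fun j => ch_mono hμ h𝒜 (hEAmem E hE j) hE Set.inter_subset_left
  have hlam_nonneg : ∀ E ∈ 𝒜, 0 ≤ lam E := by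
    intro E hE
    have h1 : μ (E ∩ A 0) ≤ lam E := le_ciSup (hbddj E hE) 0
    have h2 : 0 ≤ μ (E ∩ A 0) := ch_nonneg hμ (hEAmem E hE 0)
    linarith
  have hlam_empty : lam ∅ = 0 := by
    rw [hlamdef]
    simp only [Set.empty_inter, hμ.1]
    exact ciSup_const
  have hlam_add : ∀ E ∈ 𝒜, ∀ F ∈ 𝒜, Disjoint E F → lam (E ∪ F) = lam E + lam F := by
    intro E hE F hF hdisj
    have t1 : Tendsto (fun j => μ ((E ∪ F) ∩ A j)) atTop (𝓝 (lam (E ∪ F))) :=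
      htend _ (sf_union h𝒜 hE hF)
    have t2 : Tendsto (fun j => μ (E ∩ A j) + μ (F ∩ A j)) atTop (𝓝 (lam E + lam F)) :=
      (htend E hE).add (htend F hF)
    have heq : (fun j => μ ((E ∪ F) ∩ A j)) = fun j => μ (E ∩ A j) + μ (F ∩ A j) := by
      funext j
      rw [Set.union_inter_distrib_right]
      exact hμ.2.2 _ (hEAmem E hE j) _ (hEAmem F hF j)
        (Set.disjoint_of_subset Set.inter_subset_left Set.inter_subset_left hdisj)
    rw [heq] at t1
    exact tendsto_nhds_unique t1 t2
  -- the limit L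
  set L : ℝ := ⨆ j, μ (A j) with hLdef
  have hbddA : BddAbove (Set.range (fun j => μ (A j))) :=
    ⟨μ Set.univ, by rintro x ⟨j, rfl⟩; exact ch_le_univ hμ h𝒜 (hA j)⟩
  have hmonoA : Monotone (fun j => μ (A j)) := fun i j hij =>
    ch_mono hμ h𝒜 (hA i) (hA j) (hmono hij)
  have htendL : Tendsto (fun j => μ (A j)) atTop (𝓝 L) := tendsto_atTop_ciSup hmonoA hbddA
  have hL0 : 0 ≤ L := by
    have h1 : μ (A 0) ≤ L := le_ciSup hbddA 0
    have h2 : 0 ≤ μ (A 0) := ch_nonneg hμ (hA 0)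
    linarith
  -- the slope t
  set t : ℝ := (L + ε/2)/(L + ε) with htdef
  have hLε : 0 < L + ε := by linarith
  have ht0 : 0 < t := div_pos (by linarith) hLε
  have ht1 : t < 1 := (div_lt_one hLε).2 (by linarith)
  have htprod : t * (L + ε) = L + ε/2 := by
    rw [htdef, div_mul_cancel₀ _ (ne_of_gt hLε)]
  -- the signed charge ρ
  set ρ : Set X → ℝ := fun E => lam E - t * μ E with hρdef
  have hρ0 : ρ ∅ = 0 := by rw [hρdef]; simp [hlam_empty, hμ.1]
  have hρadd : ∀ E ∈ 𝒜, ∀ F ∈ 𝒜, Disjoint E F → ρ (E ∪ F) = ρ E + ρ F := by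
    intro E hE F hF hdisj
    have h1 := hlam_add E hE F hF hdisj
    have h2 := hμ.2.2 E hE F hF hdisj
    rw [hρdef]; simp only [h1, h2]; ring
  have hρbdd : ∃ M : ℝ, ∀ E ∈ 𝒜, |ρ E| ≤ M := by
    refine ⟨2 * μ Set.univ, fun E hE => ?_⟩
    have h1 : 0 ≤ lam E := hlam_nonneg E hE
    have h2 : lam E ≤ μ E := hlam_le E hE
    have h3 : μ E ≤ μ Set.univ := ch_le_univ hμ h𝒜 hE
    have h4 : 0 ≤ μ E := ch_nonneg hμ hE
    have h5 : 0 ≤ t * μ E := mul_nonneg (le_of_lt ht0) h4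
    have h6 : t * μ E ≤ μ E := by nlinarith
    rw [abs_le]
    constructor <;> [skip; skip] <;> rw [hρdef] <;> simp only [] <;> nlinarith
  have hρAC : ∀ ε' : ℝ, 0 < ε' → ∃ δ : ℝ, 0 < δ ∧ ∀ E ∈ 𝒜, μ E < δ → |ρ E| < ε' := by
    intro ε' hε'
    refine ⟨ε'/2, by linarith, fun E hE hEδ => ?_⟩
    have h1 : 0 ≤ lam E := hlam_nonneg E hE
    have h2 : lam E ≤ μ E := hlam_le E hE
    have h4 : 0 ≤ μ E := ch_nonneg hμ hE
    have h5 : 0 ≤ t * μ E := mul_nonneg (le_of_lt ht0) h4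
    have h6 : t * μ E ≤ μ E := by nlinarith
    rw [abs_lt]
    constructor <;> rw [hρdef] <;> simp only [] <;> nlinarith
  obtain ⟨S, hSmem, hSpos, hSneg⟩ := hH ρ hρ0 hρadd hρbdd hρAC
  refine ⟨S, hSmem, L, htendL, ?_, ?_⟩
  · -- μ S ≤ L + ε
    have h1 : 0 ≤ ρ S := hSpos S hSmem (le_refl _)
    have h2 : lam S ≤ L := by
      refine ciSup_le fun j => ?_
      have := ch_mono hμ h𝒜 (hEAmem S hSmem j) (hA j) Set.inter_subset_right
      exact le_trans this (le_ciSup hbddA j)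
    have h3 : t * μ S ≤ lam S := by rw [hρdef] at h1; simp only [] at h1; linarith
    have h4 : t * μ S ≤ t * (L + ε) := by rw [htprod]; linarith
    exact le_of_mul_le_mul_left h4 ht0
  · -- nullity
    intro i
    set s : ℝ := μ (A i \ S) with hsdef
    have hmem : A i \ S ∈ 𝒜 := sf_diff h𝒜 (hA i) hSmem
    have hsub : A i \ S ⊆ Sᶜ := fun x hx => hx.2
    have h1 : ρ (A i \ S) ≤ 0 := hSneg _ hmem hsub
    have h2 : lam (A i \ S) ≤ t * s := by rw [hρdef] at h1; simp only [] at h1; linarith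
    have h3 : s ≤ lam (A i \ S) := by
      have e1 : (A i \ S) ∩ A i = A i \ S := by
        ext x; exact ⟨fun hx => hx.1, fun hx => ⟨hx, hx.1⟩⟩
      have := le_ciSup (hbddj _ hmem) i
      rwa [e1] at this
    have h4 : 0 ≤ s := ch_nonneg hμ hmem
    nlinarith
end HahnAux


/-- Hahn decomposition characterization of the additive property: a charge `μ`
on a σ-algebra has the additive property iff every bounded finitely additive
real-valued `ν` absolutely continuous w.r.t. `μ` admits a Hahn decomposition. -/
theorem hasAdditiveProperty_iff_hahn
    (𝒜 : Set (Set X)) (h𝒜 : IsSigmaField 𝒜)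
    (μ : Set X → ℝ) (hμ : IsCharge 𝒜 μ) :
    HasAdditiveProperty 𝒜 μ ↔
      ∀ ν : Set X → ℝ, ν ∅ = 0 →
        (∀ A ∈ 𝒜, ∀ B ∈ 𝒜, Disjoint A B → ν (A ∪ B) = ν A + ν B) →
        (∃ M : ℝ, ∀ A ∈ 𝒜, |ν A| ≤ M) →
        (∀ ε : ℝ, 0 < ε → ∃ δ : ℝ, 0 < δ ∧ ∀ A ∈ 𝒜, μ A < δ → |ν A| < ε) →
        ∃ A ∈ 𝒜, (∀ B ∈ 𝒜, B ⊆ A → 0 ≤ ν B) ∧ ∀ B ∈ 𝒜, B ⊆ Aᶜ → ν B ≤ 0 := by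
  constructor
  · intro hadd ν hν0 hνadd hM hAC
    exact HahnAux.forward_dir h𝒜 hμ hadd ν hν0 hνadd hM hAC
  · intro hH
    exact HahnAux.backward_dir h𝒜 hμ hH
end

section
/- Let μ be a charge on 𝒜 with Stone extension μ̂, and let S = supp μ be the set of points x ∈ F all of whose open neighborhoods have positive μ̂-measure. Then μ has the additive property if and only if for every open set U ⊆ F one has μ̂(U ∩ S) = μ̂(cl(U ∩ S) ∩ S), where cl denotes closure in F (so cl(U ∩ S) ∩ S is the closure of U ∩ S in the subspace S). -/
open Filter Topology MeasureTheory

variable {X : Type*}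

/-!
Write `S` for the support of `μ̂`; it is closed and `μ̂`-conull. If `μ` has the additive property
and `U` is open, exhaust `U` up to a null set by an increasing sequence of clopen sets `φ Aₙ`. The
set `B` given by the additive property satisfies `μ̂ (φ B) ≤ μ̂ U + ε`, and `U \ φ B` is an open
null set, hence misses `S`; so the closed set `φ B` contains `cl (U ∩ S)`. Conversely, for an
increasing sequence `Aₙ` put `U = ⋃ φ Aₙ`; the compact set `cl (U ∩ S) ∩ S` has measure `μ̂ U`, so
by outer regularity and zero-dimensionality it lies in a clopen `φ B` of measure `≤ μ̂ U + ε`,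
and `φ Aₙ \ φ B` lies outside `S`.
-/

open Set

lemma IsSetField.diff_mem {𝒜 : Set (Set X)} (h𝒜 : IsSetField 𝒜) {A B : Set X} (hA : A ∈ 𝒜)
    (hB : B ∈ 𝒜) : A \ B ∈ 𝒜 := by
  rw [sdiff_eq, ← compl_compl (A ∩ Bᶜ), compl_inter, compl_compl]
  exact h𝒜.2.2.1 _ (h𝒜.2.2.2 _ (h𝒜.2.2.1 _ hA) _ hB)

structure IsStoneRepresentation {F : Type*} [TopologicalSpace F] (𝒜 : Set (Set X))
    (φ : Set X → Set F) : Prop where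
  injOn : ∀ A ∈ 𝒜, ∀ B ∈ 𝒜, φ A = φ B → A = B
  isClopen : ∀ A ∈ 𝒜, IsClopen (φ A)
  surj : ∀ C : Set F, IsClopen C → ∃ A ∈ 𝒜, φ A = C
  map_union : ∀ A ∈ 𝒜, ∀ B ∈ 𝒜, φ (A ∪ B) = φ A ∪ φ B
  map_compl : ∀ A ∈ 𝒜, φ Aᶜ = (φ A)ᶜ

namespace IsStoneRepresentation

variable {F : Type*} [TopologicalSpace F] {𝒜 : Set (Set X)} {φ : Set X → Set F}

lemma map_mono (hφ : IsStoneRepresentation 𝒜 φ) {A B : Set X} (hA : A ∈ 𝒜) (hB : B ∈ 𝒜)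
    (hAB : A ⊆ B) : φ A ⊆ φ B := by
  rw [← union_eq_right.mpr hAB, hφ.map_union A hA B hB]
  exact subset_union_left

lemma subset_of_map_subset (hφ : IsStoneRepresentation 𝒜 φ) (h𝒜 : IsSetField 𝒜) {A B : Set X}
    (hA : A ∈ 𝒜) (hB : B ∈ 𝒜) (hAB : φ A ⊆ φ B) : A ⊆ B := by
  refine union_eq_right.mp (hφ.injOn _ (h𝒜.2.2.2 A hA B hB) B hB ?_)
  rw [hφ.map_union A hA B hB, union_eq_right.mpr hAB]

lemma map_diff (hφ : IsStoneRepresentation 𝒜 φ) (h𝒜 : IsSetField 𝒜) {A B : Set X} (hA : A ∈ 𝒜)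
    (hB : B ∈ 𝒜) : φ (A \ B) = φ A \ φ B := by
  have hAB : A \ B = (Aᶜ ∪ B)ᶜ := by rw [compl_union, compl_compl, sdiff_eq]
  rw [hAB, hφ.map_compl _ (h𝒜.2.2.2 _ (h𝒜.2.2.1 A hA) B hB),
    hφ.map_union _ (h𝒜.2.2.1 A hA) B hB, hφ.map_compl A hA, compl_union, compl_compl, sdiff_eq]

variable [MeasurableSpace F] {m : Measure F} [IsFiniteMeasure m] {μ : Set X → ℝ}

lemma tendsto_charge (hφ : IsStoneRepresentation 𝒜 φ) (hμ : ∀ A ∈ 𝒜, (m (φ A)).toReal = μ A)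
    {A : ℕ → Set X} (hA : ∀ n, A n ∈ 𝒜) (hAmono : Monotone A) :
    Tendsto (fun n => μ (A n)) atTop (𝓝 (m (⋃ n, φ (A n))).toReal) := by
  have hmono : Monotone fun n => φ (A n) := fun a b hab => hφ.map_mono (hA a) (hA b) (hAmono hab)
  simp_rw [← hμ _ (hA _)]
  exact (ENNReal.tendsto_toReal (measure_ne_top m _)).comp (tendsto_measure_iUnion_atTop hmono)

end IsStoneRepresentation

lemma msupp_eq_support {F : Type*} [TopologicalSpace F] [MeasurableSpace F] (m : Measure F) :
    msupp m = m.support := by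
  rw [Measure.support_eq_forall_isOpen]
  ext x
  exact forall_congr' fun U => forall_comm

section StoneSpace

variable {F : Type*} [TopologicalSpace F] [CompactSpace F] [T2Space F]
  [TotallyDisconnectedSpace F] [MeasurableSpace F] (m : Measure F)

lemma exists_isClopen_subset_lt_measure [m.Regular] {U : Set F} (hU : IsOpen U)
    {r : ENNReal} (hr : r < m U) : ∃ C, IsClopen C ∧ C ⊆ U ∧ r < m C := by
  obtain ⟨K, hKU, hK, hrK⟩ := hU.exists_lt_isCompact hr
  obtain ⟨C, hC, hKC, hCU⟩ := exists_clopen_of_closed_subset_open hK.isClosed hU hKU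
  exact ⟨C, hC, hCU, hrK.trans_le (measure_mono hKC)⟩

lemma exists_monotone_isClopen_measure_diff_iUnion_eq_zero [OpensMeasurableSpace F]
    [IsFiniteMeasure m] [m.Regular] {U : Set F} (hU : IsOpen U) :
    ∃ D : ℕ → Set F, Monotone D ∧ (∀ n, IsClopen (D n)) ∧ (∀ n, D n ⊆ U) ∧
      m (U \ ⋃ n, D n) = 0 := by
  rcases eq_zero_or_pos (m U) with hU0 | hUpos
  · exact ⟨fun _ => ∅, monotone_const, fun _ => isClopen_empty, fun _ => empty_subset U,
      measure_mono_null sdiff_subset hU0⟩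
  obtain ⟨r, -, hr, hrU⟩ := exists_seq_strictMono_tendsto' hUpos
  choose C hC hCU hrC using fun n => exists_isClopen_subset_lt_measure m hU (hr n).2
  have hCU' : (⋃ n, C n) ⊆ U := iUnion_subset hCU
  refine ⟨accumulate C, monotone_accumulate,
    fun n => (finite_Iic n).isClopen_biUnion fun k _ => hC k,
    fun n => (accumulate_subset_iUnion n).trans hCU', ?_⟩
  have hle : m U ≤ m (⋃ n, C n) :=
    le_of_tendsto' hrU fun n => (hrC n).le.trans (measure_mono (subset_iUnion C n))
  rw [iUnion_accumulate, measure_sdiff hCU' (isOpen_iUnion fun n => (hC n).isOpen).nullMeasurableSet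
    (measure_ne_top m _), tsub_eq_zero_of_le hle]

end StoneSpace

section StoneExtension

variable {F : Type*} [TopologicalSpace F] [CompactSpace F] [T2Space F]
  [TotallyDisconnectedSpace F] [MeasurableSpace F] {𝒜 : Set (Set X)} {μ : Set X → ℝ}
  {φ : Set X → Set F} {m : Measure F} [IsFiniteMeasure m] [m.Regular]

theorem measure_closure_inter_support_le_of_hasAdditiveProperty [OpensMeasurableSpace F]
    (h𝒜 : IsSetField 𝒜) (hφ : IsStoneRepresentation 𝒜 φ)
    (hμ : ∀ A ∈ 𝒜, (m (φ A)).toReal = μ A) (hadd : HasAdditiveProperty 𝒜 μ)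
    {U : Set F} (hU : IsOpen U) : m (closure (U ∩ m.support) ∩ m.support) ≤ m U := by
  refine ENNReal.le_of_forall_pos_le_add fun ε hε _ => ?_
  obtain ⟨D, hDmono, hD, hDU, hUD⟩ := exists_monotone_isClopen_measure_diff_iUnion_eq_zero m hU
  choose A hA hφA using fun n => hφ.surj _ (hD n)
  have hAmono : Monotone A := fun a b hab =>
    hφ.subset_of_map_subset h𝒜 (hA a) (hA b) (by simpa only [hφA] using hDmono hab)
  obtain ⟨B, hB, L, hL, hBL, hAB⟩ := hadd ε (by exact_mod_cast hε) A hA hAmono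
  have hLD : L = (m (⋃ n, D n)).toReal :=
    tendsto_nhds_unique hL (by simpa only [hφA] using hφ.tendsto_charge hμ hA hAmono)
  have hDB : ∀ n, m (D n \ φ B) = 0 := fun n => by
    rw [← hφA n, ← hφ.map_diff h𝒜 (hA n) hB]
    refine ((ENNReal.toReal_eq_zero_iff _).mp ?_).resolve_right (measure_ne_top m _)
    rw [hμ _ (h𝒜.diff_mem (hA n) hB), hAB n]
  have hUB : m (U \ φ B) = 0 := by
    refine measure_mono_null (sdiff_triangle U (⋃ n, D n) (φ B)) (measure_union_null hUD ?_)
    rw [iUnion_sdiff]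
    exact measure_iUnion_null hDB
  have hUsupp : U ∩ m.support ⊆ φ B := fun x hx => by
    by_contra hxB
    exact Measure.subset_compl_support_of_isOpen (hU.sdiff (hφ.isClopen B hB).isClosed) hUB
      ⟨hx.1, hxB⟩ hx.2
  calc m (closure (U ∩ m.support) ∩ m.support)
      ≤ m (φ B) :=
        measure_mono (inter_subset_left.trans (closure_minimal hUsupp (hφ.isClopen B hB).isClosed))
    _ = ENNReal.ofReal (μ B) := by rw [← hμ B hB, ENNReal.ofReal_toReal (measure_ne_top m _)]
    _ ≤ ENNReal.ofReal (L + ε) := ENNReal.ofReal_le_ofReal hBL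
    _ ≤ ENNReal.ofReal L + ENNReal.ofReal ε := ENNReal.ofReal_add_le
    _ = m (⋃ n, D n) + ε := by
        rw [hLD, ENNReal.ofReal_toReal (measure_ne_top m _), ENNReal.ofReal_coe_nnreal]
    _ ≤ m U + ε := by gcongr; exact iUnion_subset hDU

theorem hasAdditiveProperty_of_measure_inter_support_eq_closure
    (h𝒜 : IsSetField 𝒜) (hφ : IsStoneRepresentation 𝒜 φ)
    (hμ : ∀ A ∈ 𝒜, (m (φ A)).toReal = μ A)
    (h : ∀ U : Set F, IsOpen U → m (U ∩ m.support) = m (closure (U ∩ m.support) ∩ m.support)) :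
    HasAdditiveProperty 𝒜 μ := by
  intro ε hε A hA hAmono
  set U := ⋃ n, φ (A n)
  have hU : IsOpen U := isOpen_iUnion fun n => (hφ.isClopen _ (hA n)).isOpen
  have hT : m (closure (U ∩ m.support) ∩ m.support) < m U + ENNReal.ofReal ε := by
    rw [← h U hU, measure_inter_conull Measure.measure_compl_support_of_regular]
    exact ENNReal.lt_add_right (measure_ne_top m U) (ENNReal.ofReal_pos.mpr hε).ne'
  obtain ⟨W, hTW, hW, hWT⟩ := Set.exists_isOpen_lt_of_lt _ _ hT
  obtain ⟨C, hC, hTC, hCW⟩ := exists_clopen_of_closed_subset_open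
    (isClosed_closure.inter Measure.isClosed_support) hW hTW
  obtain ⟨B, hB, rfl⟩ := hφ.surj C hC
  refine ⟨B, hB, _, hφ.tendsto_charge hμ hA hAmono, ?_, fun i => ?_⟩
  · rw [← hμ B hB, ← ENNReal.toReal_ofReal hε.le,
      ← ENNReal.toReal_add (measure_ne_top m U) ENNReal.ofReal_ne_top]
    exact ENNReal.toReal_mono (ENNReal.add_ne_top.mpr ⟨measure_ne_top m U, ENNReal.ofReal_ne_top⟩)
      ((measure_mono hCW).trans hWT.le)
  · have hAB : φ (A i) \ φ B ⊆ m.supportᶜ := fun x hx hxS =>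
      hx.2 (hTC ⟨subset_closure ⟨mem_iUnion.mpr ⟨i, hx.1⟩, hxS⟩, hxS⟩)
    rw [← hμ _ (h𝒜.diff_mem (hA i) hB), hφ.map_diff h𝒜 (hA i) hB,
      measure_mono_null hAB Measure.measure_compl_support_of_regular, ENNReal.toReal_zero]

end StoneExtension

theorem hasAdditiveProperty_iff_stone_open_closure_general
    {F : Type*} [TopologicalSpace F] [CompactSpace F] [T2Space F]
    [TotallyDisconnectedSpace F] [MeasurableSpace F] [BorelSpace F]
    (𝒜 : Set (Set X)) (h𝒜 : IsSetField 𝒜)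
    (μ : Set X → ℝ) (hμ : IsCharge 𝒜 μ)
    (φ : Set X → Set F)
    (hφ_inj : ∀ A ∈ 𝒜, ∀ B ∈ 𝒜, φ A = φ B → A = B)
    (hφ_clopen : ∀ A ∈ 𝒜, IsClopen (φ A))
    (hφ_surj : ∀ C : Set F, IsClopen C → ∃ A ∈ 𝒜, φ A = C)
    (hφ_union : ∀ A ∈ 𝒜, ∀ B ∈ 𝒜, φ (A ∪ B) = φ A ∪ φ B)
    (hφ_compl : ∀ A ∈ 𝒜, φ Aᶜ = (φ A)ᶜ)
    (μhat : Measure F) [IsFiniteMeasure μhat] [μhat.Regular]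
    (hμhat : ∀ A ∈ 𝒜, μhat (φ A) = ENNReal.ofReal (μ A)) :
    HasAdditiveProperty 𝒜 μ ↔
      ∀ U : Set F, IsOpen U →
        μhat (U ∩ msupp μhat) = μhat (closure (U ∩ msupp μhat) ∩ msupp μhat) := by
  have hφ : IsStoneRepresentation 𝒜 φ := ⟨hφ_inj, hφ_clopen, hφ_surj, hφ_union, hφ_compl⟩
  have hμφ : ∀ A ∈ 𝒜, (μhat (φ A)).toReal = μ A := fun A hA => by
    rw [hμhat A hA, ENNReal.toReal_ofReal (hμ.2.1 A hA)]
  rw [msupp_eq_support]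
  refine ⟨fun hadd U hU => le_antisymm (measure_mono fun x hx => ⟨subset_closure hx, hx.2⟩) ?_,
    hasAdditiveProperty_of_measure_inter_support_eq_closure h𝒜 hφ hμφ⟩
  rw [measure_inter_conull (s := U) Measure.measure_compl_support_of_regular]
  exact measure_closure_inter_support_le_of_hasAdditiveProperty h𝒜 hφ hμφ hadd hU

/-- A charge `μ` has the additive property iff `μ̂ U = μ̂ (cl U)` for every open
set `U` of `supp μ` (closures taken inside the subspace `S = supp μ`). -/
theorem hasAdditiveProperty_iff_stone_open_closure
    {F : Type*} [TopologicalSpace F] [CompactSpace F] [T2Space F]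
    [TotallyDisconnectedSpace F] [Nonempty F] [MeasurableSpace F] [BorelSpace F]
    (𝒜 : Set (Set X)) (h𝒜 : IsSetField 𝒜)
    (μ : Set X → ℝ) (hμ : IsCharge 𝒜 μ)
    (φ : Set X → Set F)
    (hφ_inj : ∀ A ∈ 𝒜, ∀ B ∈ 𝒜, φ A = φ B → A = B)
    (hφ_clopen : ∀ A ∈ 𝒜, IsClopen (φ A))
    (hφ_surj : ∀ C : Set F, IsClopen C → ∃ A ∈ 𝒜, φ A = C)
    (hφ_empty : φ ∅ = ∅)
    (hφ_univ : φ Set.univ = Set.univ)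
    (hφ_union : ∀ A ∈ 𝒜, ∀ B ∈ 𝒜, φ (A ∪ B) = φ A ∪ φ B)
    (hφ_compl : ∀ A ∈ 𝒜, φ Aᶜ = (φ A)ᶜ)
    (μhat : Measure F) [IsFiniteMeasure μhat] [μhat.Regular]
    (hμhat : ∀ A ∈ 𝒜, μhat (φ A) = ENNReal.ofReal (μ A)) :
    HasAdditiveProperty 𝒜 μ ↔
      ∀ U : Set F, IsOpen U →
        μhat (U ∩ msupp μhat) = μhat (closure (U ∩ msupp μhat) ∩ msupp μhat) :=
  hasAdditiveProperty_iff_stone_open_closure_general 𝒜 h𝒜 μ hμ φ hφ_inj hφ_clopen hφ_surj hφ_union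
    hφ_compl μhat hμhat
end

section
/- Let μ and ν be charges on a field 𝒜 of subsets of X such that ν is absolutely continuous with respect to μ (ν ≪ μ). If μ has the additive property, then ν has the additive property. -/
open Filter Topology MeasureTheory

variable {X : Type*}

lemma IsSetField.inter {𝒜 : Set (Set X)} (h : IsSetField 𝒜) {A B : Set X}
    (hA : A ∈ 𝒜) (hB : B ∈ 𝒜) : A ∩ B ∈ 𝒜 := by
  have : A ∩ B = (Aᶜ ∪ Bᶜ)ᶜ := by simp [Set.compl_union]
  rw [this]
  exact h.2.2.1 _ (h.2.2.2 _ (h.2.2.1 _ hA) _ (h.2.2.1 _ hB))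

lemma IsSetField.diff {𝒜 : Set (Set X)} (h : IsSetField 𝒜) {A B : Set X}
    (hA : A ∈ 𝒜) (hB : B ∈ 𝒜) : A \ B ∈ 𝒜 :=
  h.inter hA (h.2.2.1 _ hB)

lemma IsCharge.split {𝒜 : Set (Set X)} {μ : Set X → ℝ} (hμ : IsCharge 𝒜 μ)
    (h𝒜 : IsSetField 𝒜) {A B : Set X} (hA : A ∈ 𝒜) (hB : B ∈ 𝒜) :
    μ A = μ (A ∩ B) + μ (A \ B) := by
  have := hμ.2.2 (A ∩ B) (h𝒜.inter hA hB) (A \ B) (h𝒜.diff hA hB)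
    (Set.disjoint_of_subset_left Set.inter_subset_right Set.disjoint_sdiff_left.symm)
  rwa [Set.inter_union_diff] at this

lemma IsCharge.mono {𝒜 : Set (Set X)} {μ : Set X → ℝ} (hμ : IsCharge 𝒜 μ)
    (h𝒜 : IsSetField 𝒜) {A B : Set X} (hA : A ∈ 𝒜) (hB : B ∈ 𝒜) (hAB : A ⊆ B) :
    μ A ≤ μ B := by
  have h := hμ.split h𝒜 hB hA
  rw [Set.inter_eq_right.mpr hAB] at h
  have := hμ.2.1 (B \ A) (h𝒜.diff hB hA)
  linarith

/-- If `ν ≪ μ` and `μ` has the additive property, then `ν` has the additive property. -/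
theorem hasAdditiveProperty_of_absCont
    (𝒜 : Set (Set X)) (h𝒜 : IsSetField 𝒜)
    (μ ν : Set X → ℝ) (hμ : IsCharge 𝒜 μ) (hν : IsCharge 𝒜 ν)
    (hac : AbsCont 𝒜 ν μ) (hap : HasAdditiveProperty 𝒜 μ) :
    HasAdditiveProperty 𝒜 ν := by
  intro ε hε A hA hAmono
  -- δ from absolute continuity for ε
  obtain ⟨δ, hδ, hδν⟩ := hac ε hε
  -- apply μ's additive property with δ/2
  obtain ⟨B, hB, Lμ, hμt, hμB, hμAB⟩ := hap (δ/2) (by linarith) A hA hAmono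
  -- ν(A i \ B) = 0 for all i
  have hνAB : ∀ i, ν (A i \ B) = 0 := by
    intro i
    have hmem : A i \ B ∈ 𝒜 := h𝒜.diff (hA i) hB
    have hnn := hν.2.1 _ hmem
    by_contra hne
    have hpos : 0 < ν (A i \ B) := lt_of_le_of_ne hnn (Ne.symm hne)
    obtain ⟨δ', hδ', h'⟩ := hac _ hpos
    exact absurd (h' _ hmem (by rw [hμAB i]; exact hδ')) (lt_irrefl _)
  -- ν(A i) is monotone and bounded
  have hνmono : Monotone (fun i => ν (A i)) := fun i j hij =>
    hν.mono h𝒜 (hA i) (hA j) (hAmono hij)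
  have hbdd : BddAbove (Set.range fun i => ν (A i)) := by
    refine ⟨ν Set.univ, ?_⟩
    rintro _ ⟨i, rfl⟩
    exact hν.mono h𝒜 (hA i) h𝒜.2.1 (Set.subset_univ _)
  set L := ⨆ i, ν (A i) with hL
  have hνt : Tendsto (fun i => ν (A i)) atTop (𝓝 L) :=
    tendsto_atTop_ciSup hνmono hbdd
  refine ⟨B, hB, L, hνt, ?_, hνAB⟩
  -- pick i with μ (A i) > Lμ - δ/2
  obtain ⟨i, hi⟩ := (hμt.eventually (eventually_gt_nhds (show Lμ - δ/2 < Lμ by linarith))).exists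
  -- μ (A i) = μ (A i ∩ B)
  have h1 : μ (A i) = μ (A i ∩ B) := by
    have := hμ.split h𝒜 (hA i) hB
    rw [hμAB i] at this; linarith
  -- μ (B \ A i) < δ
  have h2 : μ B = μ (B ∩ A i) + μ (B \ A i) := hμ.split h𝒜 hB (hA i)
  rw [Set.inter_comm] at h2
  have h3 : μ (B \ A i) < δ := by linarith
  have h4 : ν (B \ A i) < ε := hδν _ (h𝒜.diff hB (hA i)) h3
  have h5 : ν B = ν (B ∩ A i) + ν (B \ A i) := hν.split h𝒜 hB (hA i)
  have h6 : ν (B ∩ A i) ≤ ν (A i) :=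
    hν.mono h𝒜 (h𝒜.inter hB (hA i)) (hA i) Set.inter_subset_right
  have h7 : ν (A i) ≤ L := le_ciSup hbdd i
  linarith
end

section
/- Let 𝒜 be a σ-algebra of subsets of X and let μ₁, μ₂, …, μ_n be charges on 𝒜 that are pairwise singular (μ_i ⊥ μ_j for all i ≠ j). Then the charge μ₁ + μ₂ + ⋯ + μ_n has the additive property if and only if every μ_i (1 ≤ i ≤ n) has the additive property and the μ_i are pairwise strongly singular. -/
open Filter Topology MeasureTheory

variable {X : Type*}

/- ===== Auxiliary infrastructure ===== -/

section Aux

variable {𝒜 : Set (Set X)}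

theorem sf_compl (h : IsSigmaField 𝒜) {A : Set X} (hA : A ∈ 𝒜) : Aᶜ ∈ 𝒜 := h.2.2.1 A hA

theorem sf_union (h : IsSigmaField 𝒜) {A B : Set X} (hA : A ∈ 𝒜) (hB : B ∈ 𝒜) :
    A ∪ B ∈ 𝒜 := by
  have hmem : ∀ k : ℕ, (if k = 0 then A else B) ∈ 𝒜 := by
    intro k; by_cases h' : k = 0 <;> simp [h', hA, hB]
  have h2 := h.2.2.2 _ hmem
  have heq : (⋃ k : ℕ, if k = 0 then A else B) = A ∪ B := by
    apply Set.Subset.antisymm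
    · intro x hx
      rcases Set.mem_iUnion.1 hx with ⟨k, hk⟩
      by_cases h' : k = 0
      · left; simpa [h'] using hk
      · right; simpa [h'] using hk
    · intro x hx
      rcases hx with h' | h'
      · exact Set.mem_iUnion.2 ⟨0, by simpa using h'⟩
      · exact Set.mem_iUnion.2 ⟨1, by simpa using h'⟩
  rwa [heq] at h2

theorem sf_inter (h : IsSigmaField 𝒜) {A B : Set X} (hA : A ∈ 𝒜) (hB : B ∈ 𝒜) :
    A ∩ B ∈ 𝒜 := by
  have : A ∩ B = (Aᶜ ∪ Bᶜ)ᶜ := by rw [Set.compl_union, compl_compl, compl_compl]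
  rw [this]
  exact sf_compl h (sf_union h (sf_compl h hA) (sf_compl h hB))

theorem sf_diff (h : IsSigmaField 𝒜) {A B : Set X} (hA : A ∈ 𝒜) (hB : B ∈ 𝒜) :
    A \ B ∈ 𝒜 := by
  rw [Set.diff_eq]; exact sf_inter h hA (sf_compl h hB)

/- charge basics -/

variable {lam mu nu : Set X → ℝ}

theorem ch_nonneg (hm : IsCharge 𝒜 mu) {A : Set X} (hA : A ∈ 𝒜) : 0 ≤ mu A := hm.2.1 A hA

theorem ch_split (h : IsSigmaField 𝒜) (hm : IsCharge 𝒜 mu) {A B : Set X}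
    (hA : A ∈ 𝒜) (hB : B ∈ 𝒜) : mu A = mu (A ∩ B) + mu (A \ B) := by
  have hd : Disjoint (A ∩ B) (A \ B) := by
    rw [Set.disjoint_left]; rintro x ⟨-, hx2⟩ ⟨-, hx4⟩; exact hx4 hx2
  have hu : (A ∩ B) ∪ (A \ B) = A := Set.inter_union_diff A B
  calc mu A = mu ((A ∩ B) ∪ (A \ B)) := by rw [hu]
    _ = mu (A ∩ B) + mu (A \ B) := hm.2.2 _ (sf_inter h hA hB) _ (sf_diff h hA hB) hd

theorem ch_mono (h : IsSigmaField 𝒜) (hm : IsCharge 𝒜 mu) {A B : Set X}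
    (hA : A ∈ 𝒜) (hB : B ∈ 𝒜) (hAB : A ⊆ B) : mu A ≤ mu B := by
  have := ch_split h hm hB hA
  have h1 : B ∩ A = A := Set.inter_eq_right.2 hAB
  rw [h1] at this
  have := ch_nonneg hm (sf_diff h hB hA)
  linarith

theorem ch_le_univ (h : IsSigmaField 𝒜) (hm : IsCharge 𝒜 mu) {A : Set X} (hA : A ∈ 𝒜) :
    mu A ≤ mu Set.univ :=
  ch_mono h hm hA h.2.1 (Set.subset_univ A)

theorem ch_union_eq (h : IsSigmaField 𝒜) (hm : IsCharge 𝒜 mu) {A B : Set X}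
    (hA : A ∈ 𝒜) (hB : B ∈ 𝒜) : mu (A ∪ B) = mu A + mu (B \ A) := by
  have hd : Disjoint A (B \ A) := disjoint_sdiff_self_right
  have hu : A ∪ (B \ A) = A ∪ B := Set.union_diff_self
  calc mu (A ∪ B) = mu (A ∪ (B \ A)) := by rw [hu]
    _ = mu A + mu (B \ A) := hm.2.2 _ hA _ (sf_diff h hB hA) hd

theorem ch_union_le (h : IsSigmaField 𝒜) (hm : IsCharge 𝒜 mu) {A B : Set X}
    (hA : A ∈ 𝒜) (hB : B ∈ 𝒜) : mu (A ∪ B) ≤ mu A + mu B := by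
  rw [ch_union_eq h hm hA hB]
  have := ch_mono h hm (sf_diff h hB hA) hB (Set.diff_subset)
  linarith

theorem ch_le_of_diff_null (h : IsSigmaField 𝒜) (hm : IsCharge 𝒜 mu) {A B : Set X}
    (hA : A ∈ 𝒜) (hB : B ∈ 𝒜) (h0 : mu (A \ B) = 0) : mu A ≤ mu B := by
  have := ch_split h hm hA hB
  rw [h0, add_zero] at this
  rw [this]
  exact ch_mono h hm (sf_inter h hA hB) hB Set.inter_subset_right

theorem ch_compl (h : IsSigmaField 𝒜) (hm : IsCharge 𝒜 mu) {A : Set X} (hA : A ∈ 𝒜) :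
    mu Aᶜ = mu Set.univ - mu A := by
  have hd : Disjoint A Aᶜ := disjoint_compl_right
  have : mu (A ∪ Aᶜ) = mu A + mu Aᶜ := hm.2.2 _ hA _ (sf_compl h hA) hd
  rw [Set.union_compl_self] at this
  linarith

theorem isCharge_add (hm : IsCharge 𝒜 mu) (hn : IsCharge 𝒜 nu) :
    IsCharge 𝒜 (fun A => mu A + nu A) := by
  refine ⟨by simp [hm.1, hn.1], fun A hA => add_nonneg (hm.2.1 A hA) (hn.2.1 A hA),
    fun A hA B hB hd => ?_⟩
  simp only
  rw [hm.2.2 A hA B hB hd, hn.2.2 A hA B hB hd]; ring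

end Aux

/- partial unions / intersections -/

def pU (f : ℕ → Set X) : ℕ → Set X
  | 0 => f 0
  | n + 1 => pU f n ∪ f (n + 1)

def pI (f : ℕ → Set X) : ℕ → Set X
  | 0 => f 0
  | n + 1 => pI f n ∩ f (n + 1)

section PU

variable {𝒜 : Set (Set X)} {f : ℕ → Set X} {mu : Set X → ℝ}

theorem pU_mem (h : IsSigmaField 𝒜) (hf : ∀ k, f k ∈ 𝒜) : ∀ n, pU f n ∈ 𝒜
  | 0 => hf 0
  | n + 1 => sf_union h (pU_mem h hf n) (hf (n + 1))

theorem pI_mem (h : IsSigmaField 𝒜) (hf : ∀ k, f k ∈ 𝒜) : ∀ n, pI f n ∈ 𝒜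
  | 0 => hf 0
  | n + 1 => sf_inter h (pI_mem h hf n) (hf (n + 1))

theorem pU_mono : Monotone (pU f) := by
  apply monotone_nat_of_le_succ
  intro n
  exact Set.subset_union_left

theorem pI_antitone : Antitone (pI f) := by
  apply antitone_nat_of_succ_le
  intro n
  exact Set.inter_subset_left

theorem subset_pU : ∀ {k n : ℕ}, k ≤ n → f k ⊆ pU f n := by
  intro k n
  induction n with
  | zero => intro hk; rw [Nat.le_zero] at hk; subst hk; exact subset_rfl
  | succ m ih =>
    intro hk
    rcases Nat.le_succ_iff.mp hk with h' | h'
    · exact (ih h').trans Set.subset_union_left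
    · subst h'; exact Set.subset_union_right

theorem pI_subset : ∀ {k n : ℕ}, k ≤ n → pI f n ⊆ f k := by
  intro k n
  induction n with
  | zero => intro hk; rw [Nat.le_zero] at hk; subst hk; exact subset_rfl
  | succ m ih =>
    intro hk
    rcases Nat.le_succ_iff.mp hk with h' | h'
    · exact Set.inter_subset_left.trans (ih h')
    · subst h'; exact Set.inter_subset_right

theorem ch_pU_le (h : IsSigmaField 𝒜) (hm : IsCharge 𝒜 mu) (hf : ∀ k, f k ∈ 𝒜) :
    ∀ n, mu (pU f n) ≤ ∑ k ∈ Finset.range (n + 1), mu (f k)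
  | 0 => by simp [pU]
  | n + 1 => by
    rw [Finset.sum_range_succ]
    calc mu (pU f (n + 1)) ≤ mu (pU f n) + mu (f (n + 1)) :=
          ch_union_le h hm (pU_mem h hf n) (hf (n + 1))
      _ ≤ (∑ k ∈ Finset.range (n + 1), mu (f k)) + mu (f (n + 1)) := by
          linarith [ch_pU_le h hm hf n]

end PU

/- a small limit helper -/
theorem le_of_forall_le_add_pow {c x ε : ℝ} (hε : 0 < ε)
    (h : ∀ m : ℕ, c ≤ x + ε * (1 / 2) ^ m) : c ≤ x := by
  refine le_of_forall_pos_le_add fun δ hδ => ?_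
  obtain ⟨m, hm⟩ := exists_pow_lt_of_lt_one (div_pos hδ hε) (by norm_num : (1 / 2 : ℝ) < 1)
  have h2 : ε * (1 / 2) ^ m < δ := by
    rw [lt_div_iff₀ hε] at hm
    linarith
  linarith [h m]

/- ===== Exact form of the additive property on a σ-field ===== -/

theorem exactAP {𝒜 : Set (Set X)} {lam : Set X → ℝ}
    (h𝒜 : IsSigmaField 𝒜) (hl : IsCharge 𝒜 lam) (hAP : HasAdditiveProperty 𝒜 lam)
    (A : ℕ → Set X) (hA : ∀ i, A i ∈ 𝒜) (hmono : Monotone A) :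
    ∃ B ∈ 𝒜, (∀ i, lam (A i \ B) = 0) ∧ lam B ≤ ⨆ i, lam (A i) := by
  classical
  set L : ℝ := ⨆ i, lam (A i) with hL
  have hbdd : BddAbove (Set.range fun i => lam (A i)) := by
    refine ⟨lam Set.univ, ?_⟩
    rintro x ⟨i, rfl⟩
    exact ch_le_univ h𝒜 hl (hA i)
  have hms : Monotone fun i => lam (A i) := fun i j hij =>
    ch_mono h𝒜 hl (hA i) (hA j) (hmono hij)
  have hTend : Tendsto (fun i => lam (A i)) atTop (𝓝 L) := tendsto_atTop_ciSup hms hbdd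
  have key : ∀ k : ℕ, ∃ B ∈ 𝒜, lam B ≤ L + (1 / 2) ^ k ∧ ∀ i, lam (A i \ B) = 0 := by
    intro k
    obtain ⟨B, hB, L', hT', hle, hnull⟩ :=
      hAP ((1 / 2) ^ k) (by positivity) A hA hmono
    have hLL : L' = L := tendsto_nhds_unique hT' hTend
    exact ⟨B, hB, by rw [← hLL]; exact hle, hnull⟩
  choose Bk hBkmem hBkle hBknull using key
  set Bc : ℕ → Set X := pI Bk with hBc
  have hBcmem : ∀ m, Bc m ∈ 𝒜 := pI_mem h𝒜 hBkmem
  have hnullc : ∀ i m, lam (A i \ Bc m) = 0 := by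
    intro i m
    induction m with
    | zero => exact hBknull 0 i
    | succ m ih =>
      have hsub : A i \ Bc (m + 1) ⊆ (A i \ Bc m) ∪ (A i \ Bk (m + 1)) := by
        show A i \ (Bc m ∩ Bk (m + 1)) ⊆ _
        rw [Set.diff_inter]
      have h1 : lam (A i \ Bc (m + 1)) ≤ lam ((A i \ Bc m) ∪ (A i \ Bk (m + 1))) :=
        ch_mono h𝒜 hl (sf_diff h𝒜 (hA i) (hBcmem (m + 1)))
          (sf_union h𝒜 (sf_diff h𝒜 (hA i) (hBcmem m)) (sf_diff h𝒜 (hA i) (hBkmem (m + 1)))) hsub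
      have h2 : lam ((A i \ Bc m) ∪ (A i \ Bk (m + 1))) ≤
          lam (A i \ Bc m) + lam (A i \ Bk (m + 1)) :=
        ch_union_le h𝒜 hl (sf_diff h𝒜 (hA i) (hBcmem m)) (sf_diff h𝒜 (hA i) (hBkmem (m + 1)))
      have h3 := ch_nonneg hl (sf_diff h𝒜 (hA i) (hBcmem (m + 1)))
      rw [ih, hBknull (m + 1) i] at h2
      linarith
  set B : Set X := ⋃ m, (A m ∩ Bc m) with hBdef
  have hBmem : B ∈ 𝒜 := h𝒜.2.2.2 _ fun m => sf_inter h𝒜 (hA m) (hBcmem m)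
  refine ⟨B, hBmem, ?_, ?_⟩
  · -- nullity
    intro i
    have hsub : A i \ B ⊆ A i \ Bc i := by
      rintro x ⟨hxA, hxB⟩
      refine ⟨hxA, fun hxc => hxB ?_⟩
      exact Set.mem_iUnion.2 ⟨i, hxA, hxc⟩
    have h1 : lam (A i \ B) ≤ lam (A i \ Bc i) :=
      ch_mono h𝒜 hl (sf_diff h𝒜 (hA i) hBmem) (sf_diff h𝒜 (hA i) (hBcmem i)) hsub
    have h2 := ch_nonneg hl (sf_diff h𝒜 (hA i) hBmem)
    rw [hnullc i i] at h1
    linarith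
  · -- mass bound
    have hbound : ∀ M : ℕ, lam B ≤ L + (1 / 2) ^ (M + 1) := by
      intro M
      have hsub : B ⊆ A M ∪ Bc (M + 1) := by
        rintro x hx
        rcases Set.mem_iUnion.1 hx with ⟨m, hxA, hxB⟩
        rcases le_or_gt m M with h' | h'
        · exact Or.inl (hmono h' hxA)
        · exact Or.inr (pI_antitone h' hxB)
      have h1 : lam B ≤ lam (A M ∪ Bc (M + 1)) :=
        ch_mono h𝒜 hl hBmem (sf_union h𝒜 (hA M) (hBcmem (M + 1))) hsub
      have h2 : lam (A M ∪ Bc (M + 1)) = lam (A M) + lam (Bc (M + 1) \ A M) :=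
        ch_union_eq h𝒜 hl (hA M) (hBcmem (M + 1))
      -- lam (Bc (M+1)) = lam (Bc (M+1) ∩ A M) + lam (Bc (M+1) \ A M)
      have h3 : lam (Bc (M + 1)) = lam (Bc (M + 1) ∩ A M) + lam (Bc (M + 1) \ A M) :=
        ch_split h𝒜 hl (hBcmem (M + 1)) (hA M)
      -- lam (A M) = lam (A M ∩ Bc (M+1)) + lam (A M \ Bc (M+1)) with last = 0
      have h4 : lam (A M) = lam (A M ∩ Bc (M + 1)) + lam (A M \ Bc (M + 1)) :=
        ch_split h𝒜 hl (hA M) (hBcmem (M + 1))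
      rw [hnullc M (M + 1), add_zero] at h4
      rw [Set.inter_comm] at h3
      have h5 : lam (Bc (M + 1)) ≤ lam (Bk (M + 1)) :=
        ch_mono h𝒜 hl (hBcmem (M + 1)) (hBkmem (M + 1)) (pI_subset (le_refl (M + 1)))
      have h6 := hBkle (M + 1)
      linarith
    refine le_of_forall_le_add_pow (one_pos) fun m => ?_
    have := hbound m
    have hp : (1 / 2 : ℝ) ^ (m + 1) ≤ (1 / 2) ^ m :=
      pow_le_pow_of_le_one (by norm_num) (by norm_num) (Nat.le_succ m)
    linarith

/- ===== Singularity + AP of the sum implies strong singularity ===== -/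

theorem strongSing_of_sing_ap {𝒜 : Set (Set X)} {mu nu : Set X → ℝ}
    (h𝒜 : IsSigmaField 𝒜) (hm : IsCharge 𝒜 mu) (hn : IsCharge 𝒜 nu)
    (hs : Sing 𝒜 mu nu) (hAP : HasAdditiveProperty 𝒜 fun A => mu A + nu A) :
    StrongSing 𝒜 mu nu := by
  classical
  have hlam : IsCharge 𝒜 (fun A => mu A + nu A) := isCharge_add hm hn
  -- Step C: for every ε there is an exactly μ-null set whose complement has small ν
  have stepC : ∀ ε : ℝ, 0 < ε → ∃ E ∈ 𝒜, mu E = 0 ∧ nu Eᶜ ≤ ε := by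
    intro ε hε
    have hch : ∀ k : ℕ, ∃ D ∈ 𝒜, mu D < ε * (1 / 2) ^ (k + 1) ∧ nu Dᶜ < ε * (1 / 2) ^ (k + 1) :=
      fun k => hs _ (by positivity)
    choose D hD hD1 hD2 using hch
    set g : ℕ → Set X := fun k => (D k)ᶜ with hg_def
    have hg : ∀ k, g k ∈ 𝒜 := fun k => sf_compl h𝒜 (hD k)
    set A : ℕ → Set X := pU g with hA_def
    have hAmem : ∀ m, A m ∈ 𝒜 := pU_mem h𝒜 hg
    have hAmono : Monotone A := pU_mono
    have hnuA : ∀ m, nu (A m) ≤ ε := by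
      intro m
      calc nu (A m) ≤ ∑ k ∈ Finset.range (m + 1), nu (g k) := ch_pU_le h𝒜 hn hg m
        _ ≤ ∑ k ∈ Finset.range (m + 1), ε * (1 / 2) ^ (k + 1) :=
            Finset.sum_le_sum fun k _ => (hD2 k).le
        _ = ε / 2 * ∑ k ∈ Finset.range (m + 1), (1 / 2) ^ k := by
            rw [Finset.mul_sum]
            exact Finset.sum_congr rfl fun k _ => by ring
        _ ≤ ε / 2 * 2 := by
            have := sum_geometric_two_le (m + 1)
            have h2 : (0:ℝ) ≤ ε / 2 := by positivity
            exact mul_le_mul_of_nonneg_left this h2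
        _ = ε := by ring
    obtain ⟨B, hB, hBnull, hBle⟩ := exactAP h𝒜 hlam hAP A hAmem hAmono
    have hsup : (⨆ m, mu (A m) + nu (A m)) ≤ mu Set.univ + ε :=
      ciSup_le fun m => add_le_add (ch_le_univ h𝒜 hm (hAmem m)) (hnuA m)
    have hmuAmB : ∀ m, mu (A m \ B) = 0 := by
      intro m
      have h0 := hBnull m
      have h1 := ch_nonneg hm (sf_diff h𝒜 (hAmem m) hB)
      have h2 := ch_nonneg hn (sf_diff h𝒜 (hAmem m) hB)
      linarith
    have hmuBge : mu Set.univ ≤ mu B := by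
      refine le_of_forall_le_add_pow hε fun m => ?_
      have h1 : mu (A m) ≤ mu B := ch_le_of_diff_null h𝒜 hm (hAmem m) hB (hmuAmB m)
      have h2 : mu (g m) ≤ mu (A m) := ch_mono h𝒜 hm (hg m) (hAmem m) (subset_pU (le_refl m))
      have h3 : mu (g m) = mu Set.univ - mu (D m) := ch_compl h𝒜 hm (hD m)
      have h4 := hD1 m
      have hp : ε * (1 / 2 : ℝ) ^ (m + 1) ≤ ε * (1 / 2) ^ m := by
        have h := pow_le_pow_of_le_one (by norm_num : (0:ℝ) ≤ 1/2) (by norm_num) (Nat.le_succ m)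
        exact mul_le_mul_of_nonneg_left h hε.le
      linarith
    have hmuBeq : mu B = mu Set.univ := le_antisymm (ch_le_univ h𝒜 hm hB) hmuBge
    have hlamB : mu B + nu B ≤ mu Set.univ + ε := le_trans hBle hsup
    have hnuB : nu B ≤ ε := by rw [hmuBeq] at hlamB; linarith
    refine ⟨Bᶜ, sf_compl h𝒜 hB, ?_, ?_⟩
    · rw [ch_compl h𝒜 hm hB, hmuBeq]; ring
    · rwa [compl_compl]
  -- Step D: pass to the limit using the exact AP once more
  have hEk : ∀ k : ℕ, ∃ E ∈ 𝒜, mu E = 0 ∧ nu Eᶜ ≤ (1 / 2) ^ k :=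
    fun k => stepC _ (by positivity)
  choose E hE hE1 hE2 using hEk
  set F : ℕ → Set X := pU E with hF_def
  have hFmem : ∀ m, F m ∈ 𝒜 := pU_mem h𝒜 hE
  have hFmono : Monotone F := pU_mono
  have hmuF : ∀ m, mu (F m) = 0 := by
    intro m
    induction m with
    | zero => exact hE1 0
    | succ m ih =>
      have h1 : mu (F (m + 1)) ≤ mu (F m) + mu (E (m + 1)) :=
        ch_union_le h𝒜 hm (hFmem m) (hE (m + 1))
      have h2 := ch_nonneg hm (hFmem (m + 1))
      rw [ih, hE1 (m + 1)] at h1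
      linarith
  have hnuF : ∀ m, nu Set.univ - (1 / 2) ^ m ≤ nu (F m) := by
    intro m
    have h1 : nu (E m) ≤ nu (F m) := ch_mono h𝒜 hn (hE m) (hFmem m) (subset_pU (le_refl m))
    have h2 : nu (E m)ᶜ = nu Set.univ - nu (E m) := ch_compl h𝒜 hn (hE m)
    have h3 := hE2 m
    linarith
  obtain ⟨B, hB, hBnull, hBle⟩ := exactAP h𝒜 hlam hAP F hFmem hFmono
  have hsup : (⨆ m, mu (F m) + nu (F m)) ≤ nu Set.univ := by
    refine ciSup_le fun m => ?_
    rw [hmuF m, zero_add]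
    exact ch_le_univ h𝒜 hn (hFmem m)
  have hnuFmB : ∀ m, nu (F m \ B) = 0 := by
    intro m
    have h0 := hBnull m
    have h1 := ch_nonneg hm (sf_diff h𝒜 (hFmem m) hB)
    have h2 := ch_nonneg hn (sf_diff h𝒜 (hFmem m) hB)
    linarith
  have hnuBge : nu Set.univ ≤ nu B := by
    refine le_of_forall_le_add_pow one_pos fun m => ?_
    have h1 : nu (F m) ≤ nu B := ch_le_of_diff_null h𝒜 hn (hFmem m) hB (hnuFmB m)
    have h2 := hnuF m
    have : (1:ℝ) * (1 / 2) ^ m = (1 / 2) ^ m := one_mul _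
    linarith
  have hnuBeq : nu B = nu Set.univ := le_antisymm (ch_le_univ h𝒜 hn hB) hnuBge
  have hlamB : mu B + nu B ≤ nu Set.univ := le_trans hBle hsup
  have hmuB : mu B = 0 := by
    have h1 := ch_nonneg hm hB
    rw [hnuBeq] at hlamB
    linarith
  refine ⟨B, hB, hmuB, ?_⟩
  rw [ch_compl h𝒜 hn hB, hnuBeq]; ring

/- ===== finite (Finset-indexed) unions and intersections ===== -/

section FinAux

variable {𝒜 : Set (Set X)} {ι : Type*} {f : ι → Set X} {mu : Set X → ℝ}

theorem sf_biInter (h𝒜 : IsSigmaField 𝒜) (s : Finset ι) (hf : ∀ k ∈ s, f k ∈ 𝒜) :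
    (⋂ k ∈ s, f k) ∈ 𝒜 := by
  classical
  induction s using Finset.induction_on with
  | empty => simpa using h𝒜.2.1
  | @insert a s ha ih =>
    rw [Finset.set_biInter_insert]
    exact sf_inter h𝒜 (hf a (Finset.mem_insert_self a s))
      (ih fun k hk => hf k (Finset.mem_insert_of_mem hk))

theorem sf_biUnion (h𝒜 : IsSigmaField 𝒜) (s : Finset ι) (hf : ∀ k ∈ s, f k ∈ 𝒜) :
    (⋃ k ∈ s, f k) ∈ 𝒜 := by
  classical
  induction s using Finset.induction_on with
  | empty => simpa using h𝒜.1
  | @insert a s ha ih =>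
    rw [Finset.set_biUnion_insert]
    exact sf_union h𝒜 (hf a (Finset.mem_insert_self a s))
      (ih fun k hk => hf k (Finset.mem_insert_of_mem hk))

theorem ch_biUnion_le (h𝒜 : IsSigmaField 𝒜) (hm : IsCharge 𝒜 mu) (s : Finset ι)
    (hf : ∀ k ∈ s, f k ∈ 𝒜) : mu (⋃ k ∈ s, f k) ≤ ∑ k ∈ s, mu (f k) := by
  classical
  induction s using Finset.induction_on with
  | empty => simp [hm.1]
  | @insert a s ha ih =>
    rw [Finset.set_biUnion_insert, Finset.sum_insert ha]
    have h1 : mu (f a ∪ ⋃ k ∈ s, f k) ≤ mu (f a) + mu (⋃ k ∈ s, f k) :=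
      ch_union_le h𝒜 hm (hf a (Finset.mem_insert_self a s))
        (sf_biUnion h𝒜 s fun k hk => hf k (Finset.mem_insert_of_mem hk))
    have h2 := ih fun k hk => hf k (Finset.mem_insert_of_mem hk)
    linarith

theorem ch_biInter_compl_le (h𝒜 : IsSigmaField 𝒜) (hm : IsCharge 𝒜 mu) (s : Finset ι)
    (hf : ∀ k ∈ s, f k ∈ 𝒜) : mu ((⋂ k ∈ s, f k)ᶜ) ≤ ∑ k ∈ s, mu (f k)ᶜ := by
  classical
  induction s using Finset.induction_on with
  | empty => simp [hm.1]
  | @insert a s ha ih =>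
    rw [Finset.set_biInter_insert, Finset.sum_insert ha, Set.compl_inter]
    have h1 : mu ((f a)ᶜ ∪ (⋂ k ∈ s, f k)ᶜ) ≤ mu (f a)ᶜ + mu ((⋂ k ∈ s, f k)ᶜ) :=
      ch_union_le h𝒜 hm (sf_compl h𝒜 (hf a (Finset.mem_insert_self a s)))
        (sf_compl h𝒜 (sf_biInter h𝒜 s fun k hk => hf k (Finset.mem_insert_of_mem hk)))
    have h2 := ih fun k hk => hf k (Finset.mem_insert_of_mem hk)
    linarith

end FinAux

/- ===== componentwise consequences of the additive property of a sum ===== -/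

theorem component_bound {n : ℕ} {𝒜 : Set (Set X)} {μ : Fin n → Set X → ℝ}
    (h𝒜 : IsSigmaField 𝒜) (hμ : ∀ i, IsCharge 𝒜 (μ i))
    (hAP : HasAdditiveProperty 𝒜 (fun A => ∑ i, μ i A))
    {ε : ℝ} (hε : 0 < ε) (A : ℕ → Set X) (hA : ∀ i, A i ∈ 𝒜) (hmono : Monotone A) :
    ∃ B ∈ 𝒜, (∀ k i, μ k (A i \ B) = 0) ∧
      (∀ k, Tendsto (fun i => μ k (A i)) atTop (𝓝 (⨆ i, μ k (A i)))) ∧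
      (∀ k, (⨆ i, μ k (A i)) ≤ μ k B) ∧
      ∑ k, μ k B ≤ (∑ k, ⨆ i, μ k (A i)) + ε := by
  obtain ⟨B, hB, L, hT, hle, hnull⟩ := hAP ε hε A hA hmono
  have hTk : ∀ k, Tendsto (fun i => μ k (A i)) atTop (𝓝 (⨆ i, μ k (A i))) := fun k =>
    tendsto_atTop_ciSup (fun i j hij => ch_mono h𝒜 (hμ k) (hA i) (hA j) (hmono hij))
      ⟨μ k Set.univ, by rintro x ⟨i, rfl⟩; exact ch_le_univ h𝒜 (hμ k) (hA i)⟩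
  have hTsum : Tendsto (fun i => ∑ k, μ k (A i)) atTop (𝓝 (∑ k, ⨆ i, μ k (A i))) :=
    tendsto_finset_sum _ fun k _ => hTk k
  have hLeq : L = ∑ k, ⨆ i, μ k (A i) := tendsto_nhds_unique hT hTsum
  have hknull : ∀ k i, μ k (A i \ B) = 0 := by
    intro k i
    have h0 : ∑ j, μ j (A i \ B) = 0 := hnull i
    exact (Finset.sum_eq_zero_iff_of_nonneg
      (fun j _ => ch_nonneg (hμ j) (sf_diff h𝒜 (hA i) hB))).1 h0 k (Finset.mem_univ k)
  have hge : ∀ k, (⨆ i, μ k (A i)) ≤ μ k B := fun k =>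
    ciSup_le fun i => ch_le_of_diff_null h𝒜 (hμ k) (hA i) hB (hknull k i)
  have hle' : ∑ k, μ k B ≤ (∑ k, ⨆ i, μ k (A i)) + ε := by
    have : ∑ k, μ k B ≤ L + ε := hle
    rwa [hLeq] at this
  exact ⟨B, hB, hknull, hTk, hge, hle'⟩

/-- A finite sum of pairwise singular charges on a σ-algebra has the additive
property iff each summand has the additive property and the summands are
pairwise strongly singular. -/
theorem finite_sum_hasAdditiveProperty_iff
    (𝒜 : Set (Set X)) (h𝒜 : IsSigmaField 𝒜)
    (n : ℕ) (μ : Fin n → Set X → ℝ) (hμ : ∀ i, IsCharge 𝒜 (μ i))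
    (hsing : ∀ i j, i ≠ j → Sing 𝒜 (μ i) (μ j)) :
    HasAdditiveProperty 𝒜 (fun A => ∑ i, μ i A) ↔
      (∀ i, HasAdditiveProperty 𝒜 (μ i)) ∧
        ∀ i j, i ≠ j → StrongSing 𝒜 (μ i) (μ j) := by
  classical
  constructor
  · intro hAP
    constructor
    · intro i ε hε A hA hmono
      obtain ⟨B, hB, hknull, hTk, hge, hsum⟩ := component_bound h𝒜 hμ hAP hε A hA hmono
      refine ⟨B, hB, ⨆ j, μ i (A j), hTk i, ?_, fun j => hknull i j⟩
      have key : ∑ k, (μ k B - ⨆ j, μ k (A j)) ≤ ε := by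
        rw [Finset.sum_sub_distrib]; linarith
      have h1 : μ i B - (⨆ j, μ i (A j)) ≤ ∑ k, (μ k B - ⨆ j, μ k (A j)) :=
        Finset.single_le_sum (fun k _ => sub_nonneg.2 (hge k)) (Finset.mem_univ i)
      linarith
    · intro i j hij
      have hpairAP : HasAdditiveProperty 𝒜 (fun A => μ i A + μ j A) := by
        intro ε hε A hA hmono
        obtain ⟨B, hB, hknull, hTk, hge, hsum⟩ := component_bound h𝒜 hμ hAP hε A hA hmono
        refine ⟨B, hB, (⨆ m, μ i (A m)) + ⨆ m, μ j (A m), (hTk i).add (hTk j), ?_,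
          fun m => by show μ i (A m \ B) + μ j (A m \ B) = 0
                      rw [hknull i m, hknull j m, add_zero]⟩
        have key : ∑ k, (μ k B - ⨆ m, μ k (A m)) ≤ ε := by
          rw [Finset.sum_sub_distrib]; linarith
        have h1 : ∑ k ∈ ({i, j} : Finset (Fin n)), (μ k B - ⨆ m, μ k (A m)) ≤
            ∑ k, (μ k B - ⨆ m, μ k (A m)) :=
          Finset.sum_le_sum_of_subset_of_nonneg (Finset.subset_univ _)
            (fun k _ _ => sub_nonneg.2 (hge k))
        rw [Finset.sum_pair hij] at h1
        show μ i B + μ j B ≤ _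
        linarith
      exact strongSing_of_sing_ap h𝒜 (hμ i) (hμ j) (hsing i j hij) hpairAP
  · rintro ⟨hAPe, hss⟩ ε hε A hA hmono
    -- strongly singular witnesses
    have hDex : ∀ i j : Fin n, ∃ D : Set X, i ≠ j → D ∈ 𝒜 ∧ μ i D = 0 ∧ μ j Dᶜ = 0 := by
      intro i j
      by_cases h : i ≠ j
      · obtain ⟨D, hD, h1, h2⟩ := hss i j h
        exact ⟨D, fun _ => ⟨hD, h1, h2⟩⟩
      · exact ⟨∅, fun h' => absurd h' h⟩
    choose D hD using hDex
    set S : Fin n → Set X := fun i => ⋂ k ∈ Finset.univ.erase i, D k i with hS_def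
    have hSmem : ∀ i, S i ∈ 𝒜 := fun i =>
      sf_biInter h𝒜 _ fun k hk => (hD k i (Finset.ne_of_mem_erase hk)).1
    have hSc : ∀ i, μ i (S i)ᶜ = 0 := by
      intro i
      have h1 : μ i ((⋂ k ∈ Finset.univ.erase i, D k i)ᶜ) ≤
          ∑ k ∈ Finset.univ.erase i, μ i (D k i)ᶜ :=
        ch_biInter_compl_le h𝒜 (hμ i) _ fun k hk => (hD k i (Finset.ne_of_mem_erase hk)).1
      have h2 : ∑ k ∈ Finset.univ.erase i, μ i (D k i)ᶜ = 0 :=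
        Finset.sum_eq_zero fun k hk => (hD k i (Finset.ne_of_mem_erase hk)).2.2
      have h3 := ch_nonneg (hμ i) (sf_compl h𝒜 (hSmem i))
      rw [h2] at h1
      exact le_antisymm h1 h3
    have hSother : ∀ i k, k ≠ i → μ k (S i) = 0 := by
      intro i k hki
      have hsub : S i ⊆ D k i :=
        Set.biInter_subset_of_mem (Finset.mem_erase.2 ⟨hki, Finset.mem_univ k⟩)
      have h1 : μ k (S i) ≤ μ k (D k i) :=
        ch_mono h𝒜 (hμ k) (hSmem i) (hD k i hki).1 hsub
      have h2 := ch_nonneg (hμ k) (hSmem i)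
      rw [(hD k i hki).2.1] at h1
      exact le_antisymm h1 h2
    -- apply the additive property of each component
    set ε' : ℝ := ε / (n + 1) with hε'_def
    have hε'pos : 0 < ε' := by positivity
    have happ : ∀ i : Fin n, ∃ B ∈ 𝒜, ∃ L : ℝ,
        Tendsto (fun m => μ i (A m)) atTop (𝓝 L) ∧ μ i B ≤ L + ε' ∧
          ∀ m, μ i (A m \ B) = 0 := fun i => hAPe i ε' hε'pos A hA hmono
    choose B hBmem L hT hle hnull using happ
    set C : Set X := ⋃ k ∈ (Finset.univ : Finset (Fin n)), (B k ∩ S k) with hC_def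
    have hCmem : C ∈ 𝒜 := sf_biUnion h𝒜 _ fun k _ => sf_inter h𝒜 (hBmem k) (hSmem k)
    refine ⟨C, hCmem, ∑ k, L k, tendsto_finset_sum _ fun k _ => hT k, ?_, ?_⟩
    · -- mass bound
      have hone : ∀ i, μ i C ≤ L i + ε' := by
        intro i
        have h1 : μ i C ≤ ∑ k, μ i (B k ∩ S k) :=
          ch_biUnion_le h𝒜 (hμ i) _ fun k _ => sf_inter h𝒜 (hBmem k) (hSmem k)
        have h2 : ∀ k ∈ Finset.univ.erase i, μ i (B k ∩ S k) = 0 := by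
          intro k hk
          have hik : i ≠ k := (Finset.ne_of_mem_erase hk).symm
          have hle' : μ i (B k ∩ S k) ≤ μ i (S k) :=
            ch_mono h𝒜 (hμ i) (sf_inter h𝒜 (hBmem k) (hSmem k)) (hSmem k)
              Set.inter_subset_right
          have h3 := ch_nonneg (hμ i) (sf_inter h𝒜 (hBmem k) (hSmem k))
          rw [hSother k i hik] at hle'
          exact le_antisymm hle' h3
        have h3 : ∑ k, μ i (B k ∩ S k) = μ i (B i ∩ S i) := by
          rw [← Finset.add_sum_erase _ _ (Finset.mem_univ i), Finset.sum_eq_zero h2, add_zero]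
        have h4 : μ i (B i ∩ S i) ≤ μ i (B i) :=
          ch_mono h𝒜 (hμ i) (sf_inter h𝒜 (hBmem i) (hSmem i)) (hBmem i)
            Set.inter_subset_left
        have h5 := hle i
        rw [h3] at h1
        linarith
      have hcalc : ∑ i, μ i C ≤ (∑ i, L i) + n * ε' := by
        have := Finset.sum_le_sum (fun i (_ : i ∈ Finset.univ) => hone i)
        rw [Finset.sum_add_distrib, Finset.sum_const, Finset.card_univ, Fintype.card_fin] at this
        simpa [nsmul_eq_mul] using this
      have hfin : (n : ℝ) * ε' ≤ ε := by
        have hpos : (0:ℝ) < (n : ℝ) + 1 := by positivity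
        have heq : (n : ℝ) * ε' = (n : ℝ) * ε / ((n : ℝ) + 1) := by
          rw [hε'_def]; ring
        rw [heq, div_le_iff₀ hpos]
        nlinarith [hε.le]
      show ∑ i, μ i C ≤ (∑ k, L k) + ε
      linarith
    · intro m
      show ∑ k, μ k (A m \ C) = 0
      refine Finset.sum_eq_zero fun k _ => ?_
      have hsub : A m \ C ⊆ (A m \ B k) ∪ (S k)ᶜ := by
        rintro x ⟨hxA, hxC⟩
        by_cases hxB : x ∈ B k
        · by_cases hxS : x ∈ S k
          · have hx : x ∈ B k ∩ S k := ⟨hxB, hxS⟩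
            have hxc : x ∈ C := Set.mem_iUnion₂.2 ⟨k, Finset.mem_univ k, hx⟩
            exact absurd hxc hxC
          · exact Or.inr hxS
        · exact Or.inl ⟨hxA, hxB⟩
      have hmemu : (A m \ B k) ∪ (S k)ᶜ ∈ 𝒜 :=
        sf_union h𝒜 (sf_diff h𝒜 (hA m) (hBmem k)) (sf_compl h𝒜 (hSmem k))
      have h1 : μ k (A m \ C) ≤ μ k ((A m \ B k) ∪ (S k)ᶜ) :=
        ch_mono h𝒜 (hμ k) (sf_diff h𝒜 (hA m) hCmem) hmemu hsub
      have h2 : μ k ((A m \ B k) ∪ (S k)ᶜ) ≤ μ k (A m \ B k) + μ k ((S k)ᶜ) :=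
        ch_union_le h𝒜 (hμ k) (sf_diff h𝒜 (hA m) (hBmem k)) (sf_compl h𝒜 (hSmem k))
      have h3 := ch_nonneg (hμ k) (sf_diff h𝒜 (hA m) hCmem)
      rw [hnull k m, hSc k] at h2
      linarith
end

section
/- Fix a free ultrafilter 𝒰 on ℕ, t ∈ [0,1], θ = 2^t, and m ∈ ℕ. Let ν_{ω,m} : 𝒫(ℕ) → ℝ be the function such that for every A ⊆ ℕ, the sequence n ↦ |A ∩ (⌊θ·2^{n−m−1}⌋, ⌊θ·2^{n−m}⌋]| / (θ·2^{n−m−1}) converges to ν_{ω,m}(A) along 𝒰. Then the charge ν_{ω,m} has the additive property: for every ε > 0 and every increasing sequence A₁ ⊆ A₂ ⊆ ⋯ of subsets of ℕ there exists B ⊆ ℕ with ν_{ω,m}(B) ≤ lim_i ν_{ω,m}(A_i) + ε and ν_{ω,m}(A_i \ B) = 0 for every i. -/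
open Filter Topology

/-- The `n`-th approximant of the auxiliary charge `ν_{ω,m}` for `θ = 2^t`:
`|A ∩ (⌊θ·2^{n-m-1}⌋, ⌊θ·2^{n-m}⌋]| / (θ·2^{n-m-1})`. -/
noncomputable def auxDensity (t : ℝ) (m : ℕ) (A : Set ℕ) (n : ℕ) : ℝ :=
  (A ∩ Set.Ioc ⌊(2 : ℝ) ^ t * 2 ^ ((n : ℝ) - m - 1)⌋₊
      ⌊(2 : ℝ) ^ t * 2 ^ ((n : ℝ) - m)⌋₊).ncard /
    ((2 : ℝ) ^ t * 2 ^ ((n : ℝ) - m - 1))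

/-- The auxiliary charge `ν_{ω,m}` (the limit along a free ultrafilter of the
`auxDensity` sequence) has the additive property. -/
theorem auxCharge_hasAdditiveProperty
    (𝒰 : Ultrafilter ℕ) (hfree : (𝒰 : Filter ℕ) ≤ Filter.cofinite)
    (t : ℝ) (ht : t ∈ Set.Icc (0 : ℝ) 1) (m : ℕ)
    (ν : Set ℕ → ℝ)
    (hν : ∀ A : Set ℕ, Tendsto (auxDensity t m A) (𝒰 : Filter ℕ) (𝓝 (ν A))) :
    ∀ ε : ℝ, 0 < ε → ∀ A : ℕ → Set ℕ, Monotone A →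
      ∃ B : Set ℕ, ∃ L : ℝ, Tendsto (fun i => ν (A i)) atTop (𝓝 L) ∧
        ν B ≤ L + ε ∧ ∀ i, ν (A i \ B) = 0 := by
  intro ε hε A hA
  classical
  set θ : ℕ → ℝ := fun n => (2:ℝ)^t * 2 ^ ((n : ℝ) - m - 1) with hθdef
  have hθpos : ∀ n, 0 < θ n := by
    intro n
    exact mul_pos (Real.rpow_pos_of_pos (by norm_num) t) (Real.rpow_pos_of_pos (by norm_num) _)
  have hθ2 : ∀ n, θ (n+1) = 2 * θ n := by
    intro n
    simp only [hθdef]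
    rw [show ((n+1:ℕ):ℝ) - m - 1 = ((n:ℝ) - m - 1) + 1 by push_cast; ring,
      Real.rpow_add_one (by norm_num)]
    ring
  set f : ℕ → ℕ := fun n => ⌊θ n⌋₊ with hfdef
  have hθmono : Monotone θ := by
    intro a b hab
    apply mul_le_mul_of_nonneg_left _ (Real.rpow_pos_of_pos (by norm_num) t).le
    apply Real.rpow_le_rpow_of_exponent_le (by norm_num)
    have : (a:ℝ) ≤ b := by exact_mod_cast hab
    linarith
  have hfmono : Monotone f := fun a b hab => Nat.floor_mono (hθmono hab)
  have hwin : ∀ (S : Set ℕ) n,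
      auxDensity t m S n = (S ∩ Set.Ioc (f n) (f (n+1))).ncard / θ n := by
    intro S n
    unfold auxDensity
    congr 3
    · simp only [hfdef, hθdef]
      congr 2
      push_cast; ring
  have hfin : ∀ (S : Set ℕ) n, (S ∩ Set.Ioc (f n) (f (n+1))).Finite :=
    fun S n => (Set.finite_Ioc _ _).inter_of_right _
  -- nonnegativity of auxDensity
  have haux_nonneg : ∀ (S : Set ℕ) n, 0 ≤ auxDensity t m S n := by
    intro S n
    rw [hwin]
    positivity
  -- bound auxDensity ≤ 2
  have haux_le2 : ∀ (S : Set ℕ) n, auxDensity t m S n ≤ 2 := by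
    intro S n
    rw [hwin]
    rw [div_le_iff₀ (hθpos n)]
    calc ((S ∩ Set.Ioc (f n) (f (n+1))).ncard : ℝ)
        ≤ ((Set.Ioc (f n) (f (n+1)) : Set ℕ).ncard : ℝ) := by
          exact_mod_cast Set.ncard_le_ncard Set.inter_subset_right (Set.finite_Ioc _ _)
      _ ≤ (f (n+1) : ℝ) := by
          rw [← Finset.coe_Ioc, Set.ncard_coe_finset, Nat.card_Ioc]
          exact_mod_cast Nat.sub_le _ _
      _ ≤ θ (n+1) := Nat.floor_le (hθpos _).le
      _ = 2 * θ n := hθ2 n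
  -- monotonicity of auxDensity in the set
  have haux_mono : ∀ (S S' : Set ℕ), S ⊆ S' → ∀ n,
      auxDensity t m S n ≤ auxDensity t m S' n := by
    intro S S' hSS n
    rw [hwin, hwin]
    gcongr ?_ / _
    exact_mod_cast Set.ncard_le_ncard (Set.inter_subset_inter_left _ hSS) (hfin S' n)
  -- ν is monotone along A and bounded
  have hνmono : Monotone (fun i => ν (A i)) := by
    intro i j hij
    exact le_of_tendsto_of_tendsto' (hν (A i)) (hν (A j))
      (fun n => haux_mono _ _ (hA hij) n)
  have hνbdd : ∀ i, ν (A i) ≤ 2 :=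
    fun i => le_of_tendsto (hν (A i)) (Eventually.of_forall (haux_le2 _))
  have hBdd : BddAbove (Set.range fun i => ν (A i)) := by
    refine ⟨2, ?_⟩
    rintro x ⟨i, rfl⟩
    exact hνbdd i
  set L : ℝ := ⨆ i, ν (A i) with hLdef
  have hL : Tendsto (fun i => ν (A i)) atTop (𝓝 L) :=
    tendsto_atTop_ciSup hνmono hBdd
  have hνA_le_L : ∀ i, ν (A i) ≤ L := fun i => le_ciSup hBdd i
  have hL0 : 0 ≤ L := by
    refine le_trans ?_ (hνA_le_L 0)
    exact ge_of_tendsto (hν (A 0)) (Eventually.of_forall (haux_nonneg _))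
  -- the good sets
  have hU : ∀ i, ∀ᶠ n in (𝒰 : Filter ℕ), auxDensity t m (A i) n < L + ε := by
    intro i
    exact (hν (A i)).eventually_lt_const (by linarith [hνA_le_L i])
  -- construction of B
  set Jset : ℕ → Set ℕ :=
    fun n => {j | j ≤ n ∧ ∀ i ≤ j, auxDensity t m (A i) n < L + ε} with hJsetdef
  have hJbdd : ∀ n, BddAbove (Jset n) := fun n => ⟨n, fun j hj => hj.1⟩
  set J : ℕ → ℕ := fun n => sSup (Jset n) with hJdef
  set C : ℕ → Set ℕ := fun n => if (Jset n).Nonempty then A (J n) else ∅ with hCdef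
  set B : Set ℕ := ⋃ n, C n ∩ Set.Ioc (f n) (f (n+1)) with hBdef
  -- windows are pairwise disjoint
  have hdisj : ∀ k n : ℕ, k ≠ n →
      Set.Ioc (f k) (f (k+1)) ∩ Set.Ioc (f n) (f (n+1)) = ∅ := by
    intro k n hkn
    ext x
    simp only [Set.mem_inter_iff, Set.mem_Ioc, Set.mem_empty_iff_false, iff_false]
    rintro ⟨⟨h1, h2⟩, ⟨h3, h4⟩⟩
    rcases lt_or_gt_of_ne hkn with h | h
    · have : f (k+1) ≤ f n := hfmono (by omega)
      omega
    · have : f (n+1) ≤ f k := hfmono (by omega)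
      omega
  have hBwin : ∀ n, B ∩ Set.Ioc (f n) (f (n+1)) = C n ∩ Set.Ioc (f n) (f (n+1)) := by
    intro n
    ext x
    constructor
    · rintro ⟨hxB, hxw⟩
      rw [hBdef] at hxB
      simp only [Set.mem_iUnion] at hxB
      obtain ⟨k, hxC, hxwk⟩ := hxB
      rcases eq_or_ne k n with rfl | hkn
      · exact ⟨hxC, hxw⟩
      · exact absurd (Set.mem_inter hxwk hxw) (by rw [hdisj k n hkn]; exact id)
    · rintro ⟨hxC, hxw⟩
      refine ⟨?_, hxw⟩
      rw [hBdef]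
      exact Set.mem_iUnion.mpr ⟨n, hxC, hxw⟩
  -- auxDensity of B is bounded by L + ε
  have hauxB : ∀ n, auxDensity t m B n ≤ L + ε := by
    intro n
    rw [hwin, hBwin n]
    by_cases hne : (Jset n).Nonempty
    · have hmem : J n ∈ Jset n := Nat.sSup_mem hne (hJbdd n)
      have : auxDensity t m (A (J n)) n < L + ε := hmem.2 (J n) le_rfl
      rw [hwin] at this
      simp only [hCdef, if_pos hne]
      exact this.le
    · simp only [hCdef, if_neg hne, Set.empty_inter, Set.ncard_empty, Nat.cast_zero,
        zero_div]
      linarith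
  have hνB : ν B ≤ L + ε := le_of_tendsto (hν B) (Eventually.of_forall hauxB)
  refine ⟨B, L, hL, hνB, ?_⟩
  intro i
  -- on a 𝒰-large set of n, A i \ B misses the n-th window entirely
  have hbig : ∀ᶠ n in (𝒰 : Filter ℕ), auxDensity t m (A i \ B) n = 0 := by
    have h1 : ∀ᶠ n in (𝒰 : Filter ℕ), i ≤ n := by
      apply hfree
      simp only [mem_cofinite]
      have : {n : ℕ | i ≤ n}ᶜ = Set.Iio i := by ext x; simp
      rw [this]
      exact Set.finite_Iio i
    have h2 : ∀ᶠ n in (𝒰 : Filter ℕ), ∀ i' ∈ Finset.range (i+1),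
        auxDensity t m (A i') n < L + ε :=
      (Finset.eventually_all (Finset.range (i+1))).mpr (fun i' _ => hU i')
    filter_upwards [h1, h2] with n hn1 hn2
    have hiJ : i ∈ Jset n := ⟨hn1, fun i' hi' => hn2 i' (Finset.mem_range.mpr
      (Nat.lt_succ_of_le hi'))⟩
    have hne : (Jset n).Nonempty := ⟨i, hiJ⟩
    have hiJn : i ≤ J n := le_csSup (hJbdd n) hiJ
    have hCn : A i ⊆ C n := by
      simp only [hCdef, if_pos hne]
      exact hA hiJn
    have hempty : (A i \ B) ∩ Set.Ioc (f n) (f (n+1)) = ∅ := by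
      ext x
      simp only [Set.mem_inter_iff, Set.mem_diff, Set.mem_empty_iff_false, iff_false]
      rintro ⟨⟨hxA, hxB⟩, hxw⟩
      exact hxB (Set.mem_iUnion.mpr ⟨n, hCn hxA, hxw⟩)
    rw [hwin, hempty]
    simp
  have : Tendsto (auxDensity t m (A i \ B)) (𝒰 : Filter ℕ) (𝓝 0) :=
    Tendsto.congr' (hbig.mono fun n h => h.symm) tendsto_const_nhds
  exact tendsto_nhds_unique (hν (A i \ B)) this
end
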